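/- arXiv:2007.09154 — 4 statements merged into one kernel-verified Lean document; each statement's English description precedes it below -/
import Mathlib

section
/- If F(ρ,σ) = (Tr√(ρ^{1/2} σ ρ^{1/2}))² denotes the Uhlmann fidelity between density operators ρ and σ on a finite-dimensional Hilbert space, then 1 - √F(ρ,σ) ≤ (1/2)‖ρ - σ‖₁ ≤ √(1 - F(ρ,σ)). -/
open ComplexOrder

open Classical in
/-- Square root of a matrix: the positive semidefinite square root if the matrix is
positive semidefinite, and `0` otherwise. -/
noncomputable def msqrt {n : Type*} [Fintype n] [DecidableEq n] (A : Matrix n n ℂ) :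
    Matrix n n ℂ :=
  if h : A.PosSemidef then
    (h.1.eigenvectorUnitary : Matrix n n ℂ) * Matrix.diagonal ((↑) ∘ Real.sqrt ∘ h.1.eigenvalues) *
      (star h.1.eigenvectorUnitary : Matrix n n ℂ)
  else 0

/-- The trace norm (sum of singular values). -/
noncomputable def traceNorm {n : Type*} [Fintype n] [DecidableEq n] (A : Matrix n n ℂ) : ℝ :=
  ((msqrt (A.conjTranspose * A)).trace).re

/-- The Uhlmann fidelity `F(ρ,σ) = (Tr √(√ρ σ √ρ))²`. -/
noncomputable def fidelity {n : Type*} [Fintype n] [DecidableEq n] (ρ σ : Matrix n n ℂ) : ℝ :=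
  (((msqrt (msqrt ρ * σ * msqrt ρ)).trace).re) ^ 2

namespace FvdG

open Matrix

variable {n : Type*} [Fintype n] [DecidableEq n]

-- PART 1
section part1


variable {n : Type*} [Fintype n] [DecidableEq n]

/-- light functional calculus for a Hermitian matrix -/
noncomputable def hcfc {A : Matrix n n ℂ} (hA : A.IsHermitian) (f : ℝ → ℝ) : Matrix n n ℂ :=
  (hA.eigenvectorUnitary : Matrix n n ℂ) *
    Matrix.diagonal (fun i => (f (hA.eigenvalues i) : ℂ)) *
    star (hA.eigenvectorUnitary : Matrix n n ℂ)

variable {A : Matrix n n ℂ} (hA : A.IsHermitian) (f g : ℝ → ℝ)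

private lemma hU1 : star (hA.eigenvectorUnitary : Matrix n n ℂ) *
    (hA.eigenvectorUnitary : Matrix n n ℂ) = 1 :=
  Unitary.star_mul_self_of_mem hA.eigenvectorUnitary.2

private lemma hU2 : (hA.eigenvectorUnitary : Matrix n n ℂ) *
    star (hA.eigenvectorUnitary : Matrix n n ℂ) = 1 :=
  Unitary.mul_star_self_of_mem hA.eigenvectorUnitary.2

lemma hcfc_mul : hcfc hA f * hcfc hA g = hcfc hA (f * g) := by
  have hd : diagonal (fun i => (f (hA.eigenvalues i) : ℂ)) *
      diagonal (fun i => (g (hA.eigenvalues i) : ℂ)) =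
      diagonal (fun i => ((f * g) (hA.eigenvalues i) : ℂ)) := by
    rw [diagonal_mul_diagonal, diagonal_eq_diagonal_iff]
    intro i
    simp only [Pi.mul_apply]
    push_cast
    ring
  simp only [hcfc, mul_assoc]
  rw [← mul_assoc (star _) _, hU1, one_mul, ← mul_assoc (diagonal _), hd]

lemma hcfc_id : hcfc hA (fun x => x) = A := by
  conv_rhs => rw [hA.spectral_theorem]
  rfl

lemma hcfc_one : hcfc hA (fun _ => 1) = 1 := by
  have h2 := hU2 hA
  simp only [hcfc]
  simpa using h2

lemma hcfc_sub : hcfc hA f - hcfc hA g = hcfc hA (f - g) := by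
  have hd : diagonal (fun i => (f (hA.eigenvalues i) : ℂ)) -
      diagonal (fun i => (g (hA.eigenvalues i) : ℂ)) =
      diagonal (fun i => ((f - g) (hA.eigenvalues i) : ℂ)) := by
    rw [diagonal_sub, diagonal_eq_diagonal_iff]
    intro i
    simp only [Pi.sub_apply]
    push_cast
    ring
  simp only [hcfc, ← sub_mul, ← mul_sub, hd]

lemma hcfc_add : hcfc hA f + hcfc hA g = hcfc hA (fun x => f x + g x) := by
  have hd : diagonal (fun i => (f (hA.eigenvalues i) : ℂ)) +
      diagonal (fun i => (g (hA.eigenvalues i) : ℂ)) =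
      diagonal (fun i => ((f (hA.eigenvalues i) + g (hA.eigenvalues i) : ℝ) : ℂ)) := by
    rw [diagonal_add, diagonal_eq_diagonal_iff]
    intro i
    push_cast
    ring
  simp only [hcfc, ← add_mul, ← mul_add, hd]

lemma hcfc_herm : (hcfc hA f).IsHermitian := by
  show (hcfc hA f)ᴴ = hcfc hA f
  have hd : (diagonal (fun i => (f (hA.eigenvalues i) : ℂ)))ᴴ =
      diagonal (fun i => (f (hA.eigenvalues i) : ℂ)) := by
    rw [diagonal_conjTranspose, diagonal_eq_diagonal_iff]
    intro i
    simp [Complex.star_def, Complex.conj_ofReal]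
  simp only [hcfc, star_eq_conjTranspose]
  rw [conjTranspose_mul, conjTranspose_mul, conjTranspose_conjTranspose, hd, mul_assoc]

lemma hcfc_congr (h : ∀ i, f (hA.eigenvalues i) = g (hA.eigenvalues i)) :
    hcfc hA f = hcfc hA g := by
  have hd : (fun i => (f (hA.eigenvalues i) : ℂ)) = fun i => (g (hA.eigenvalues i) : ℂ) := by
    funext i; rw [h i]
  simp only [hcfc, hd]

lemma hcfc_trace : (hcfc hA f).trace = ((∑ i, f (hA.eigenvalues i) : ℝ) : ℂ) := by
  rw [hcfc, trace_mul_cycle, hU1, one_mul, trace_diagonal]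
  push_cast
  rfl

lemma hcfc_posSemidef (h : ∀ i, 0 ≤ f (hA.eigenvalues i)) : (hcfc hA f).PosSemidef := by
  have : (Matrix.diagonal (fun i => (f (hA.eigenvalues i) : ℂ))).PosSemidef := by
    rw [posSemidef_diagonal_iff]
    intro i
    rw [Complex.zero_le_real]
    exact h i
  simpa only [hcfc, star_eq_conjTranspose, mul_assoc] using
    this.mul_mul_conjTranspose_same (hA.eigenvectorUnitary : Matrix n n ℂ)

lemma hcfc_unitary (h : ∀ i, f (hA.eigenvalues i) * f (hA.eigenvalues i) = 1) :
    hcfc hA f ∈ Matrix.unitaryGroup n ℂ := by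
  rw [Matrix.mem_unitaryGroup_iff']
  rw [star_eq_conjTranspose, (hcfc_herm hA f).eq, hcfc_mul]
  rw [hcfc_congr hA (f * f) (fun _ => 1) (fun i => h i), hcfc_one]

lemma hcfc_smul (r : ℝ) : (r : ℂ) • hcfc hA f = hcfc hA (fun x => r * f x) := by
  rw [hcfc, hcfc, ← smul_mul_assoc, ← mul_smul_comm, ← diagonal_smul]
  congr 2
  rw [diagonal_eq_diagonal_iff]
  intro i
  push_cast
  simp

lemma hcfc_zero : hcfc hA (fun _ => 0) = 0 := by
  have h := hcfc_smul hA (fun _ => 1) 0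
  simp only [zero_mul] at h
  rw [← h, Complex.ofReal_zero, zero_smul]

/-- extract eigenvalue identities from matrix identities -/
lemma hcfc_inj (h : hcfc hA f = hcfc hA g) : ∀ i, f (hA.eigenvalues i) = g (hA.eigenvalues i) := by
  set U : Matrix n n ℂ := (hA.eigenvectorUnitary : Matrix n n ℂ) with hU
  have key : ∀ D : Matrix n n ℂ, star U * (U * D * star U) * U = D := by
    intro D
    rw [mul_assoc U D, ← mul_assoc (star U), hU1, one_mul, mul_assoc, hU1, mul_one]
  have h2 : (Matrix.diagonal (fun i => (f (hA.eigenvalues i) : ℂ)))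
      = (Matrix.diagonal (fun i => (g (hA.eigenvalues i) : ℂ))) := by
    have := congrArg (fun X => star U * X * U) h
    simp only [hcfc] at this
    rw [← hU, key, key] at this
    exact this
  intro i
  have := (diagonal_eq_diagonal_iff).mp h2 i
  exact_mod_cast this

end part1


-- Part 2 : msqrt and traceNorm basics

lemma msqrt_of_psd {A : Matrix n n ℂ} (hA : A.PosSemidef) : msqrt A = hcfc hA.1 Real.sqrt := dif_pos hA

lemma msqrt_eq_hcfc {A : Matrix n n ℂ} (hA : A.PosSemidef) :
    msqrt A = hcfc hA.1 Real.sqrt := by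
  rw [msqrt_of_psd hA]

lemma msqrt_eq_of_sq {A B : Matrix n n ℂ} (hB : B.PosSemidef) (h : B * B = A) :
    msqrt A = B := by
  have hA : A.PosSemidef := by
    rw [← h, ← pow_two]
    exact hB.pow 2
  rw [msqrt_of_psd hA]
  have e1 : hcfc hA.1 Real.sqrt = cfc Real.sqrt A := by
    rw [hA.1.cfc_eq]; rfl
  open scoped MatrixOrder in
  rw [e1, ← cfcₙ_eq_cfc, ← CFC.sqrt_eq_real_sqrt A hA.nonneg]
  open scoped MatrixOrder in
  exact CFC.sqrt_unique h hB.nonneg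

lemma msqrt_psd {A : Matrix n n ℂ} (hA : A.PosSemidef) : (msqrt A).PosSemidef := by
  rw [msqrt_of_psd hA]; exact hcfc_posSemidef hA.1 _ (fun i => Real.sqrt_nonneg _)

lemma msqrt_mul_self {A : Matrix n n ℂ} (hA : A.PosSemidef) : msqrt A * msqrt A = A := by
  rw [msqrt_of_psd hA, hcfc_mul]
  conv_rhs => rw [← hcfc_id hA.1]
  exact hcfc_congr hA.1 _ _ (fun i => Real.mul_self_sqrt (hA.eigenvalues_nonneg i))

lemma psd_trace_re_nonneg {A : Matrix n n ℂ} (hA : A.PosSemidef) : 0 ≤ A.trace.re := by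
  have h := hcfc_trace hA.1 (fun x => x)
  rw [hcfc_id] at h
  rw [h, Complex.ofReal_re]
  exact Finset.sum_nonneg fun i _ => hA.eigenvalues_nonneg i

lemma herm_trace_eq_re {A : Matrix n n ℂ} (hA : A.IsHermitian) :
    A.trace = (A.trace.re : ℂ) := by
  have h := hcfc_trace hA (fun x => x)
  rw [hcfc_id] at h
  rw [h, Complex.ofReal_re]

lemma trace_mul_psd_nonneg {A B : Matrix n n ℂ} (hA : A.PosSemidef) (hB : B.PosSemidef) :
    0 ≤ (A * B).trace.re := by
  have h1 : (A * B).trace = ((msqrt A)ᴴ * B * msqrt A).trace := by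
    rw [(msqrt_psd hA).1.eq]
    conv_lhs => rw [← msqrt_mul_self hA]
    rw [mul_assoc, trace_mul_comm]
  rw [h1]
  exact psd_trace_re_nonneg (hB.conjTranspose_mul_mul_same (msqrt A))

lemma tn_herm_eq {A : Matrix n n ℂ} (hA : A.IsHermitian) :
    traceNorm A = ∑ i, |hA.eigenvalues i| := by
  have habs : msqrt (Aᴴ * A) = hcfc hA (fun x => |x|) := by
    apply msqrt_eq_of_sq (hcfc_posSemidef hA _ (fun i => abs_nonneg _))
    rw [hcfc_mul, hA.eq]
    conv_rhs => rw [← hcfc_id hA, hcfc_mul]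
    exact hcfc_congr hA _ _ (fun i => by simp [abs_mul_abs_self])
  rw [traceNorm, conjTranspose, ← conjTranspose]
  rw [habs, hcfc_trace, Complex.ofReal_re]

lemma tn_nonneg {A : Matrix n n ℂ} (hA : A.IsHermitian) : 0 ≤ traceNorm A := by
  rw [tn_herm_eq hA]
  exact Finset.sum_nonneg fun i _ => abs_nonneg _

lemma tn_unitary_bound {A : Matrix n n ℂ} (hA : A.IsHermitian) {V : Matrix n n ℂ}
    (hV : V ∈ Matrix.unitaryGroup n ℂ) : (A * V).trace.re ≤ traceNorm A := by
  classical
  set U : Matrix n n ℂ := (hA.eigenvectorUnitary : Matrix n n ℂ) with hUdef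
  have hUmem : U ∈ Matrix.unitaryGroup n ℂ := hA.eigenvectorUnitary.2
  set V' : Matrix n n ℂ := star U * V * U with hV'def
  have hV'mem : V' ∈ Matrix.unitaryGroup n ℂ :=
    mul_mem (mul_mem (Unitary.star_mem hUmem) hV) hUmem
  have h1 : star U * U = 1 := Unitary.star_mul_self_of_mem hUmem
  have h2 : U * star U = 1 := Unitary.mul_star_self_of_mem hUmem
  have hspec : A = U * Matrix.diagonal (fun i => ((hA.eigenvalues i : ℝ) : ℂ)) * star U :=
    hA.spectral_theorem
  have htr : (A * V).trace =
      (Matrix.diagonal (fun i => ((hA.eigenvalues i : ℝ) : ℂ)) * V').trace := by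
    conv_lhs => rw [hspec]
    rw [mul_assoc (U * _) (star U) V, trace_mul_comm, ← mul_assoc, trace_mul_comm, hV'def,
      mul_assoc (star U) V U]
  rw [htr, tn_herm_eq hA]
  have hdiag : (Matrix.diagonal (fun i => ((hA.eigenvalues i : ℝ) : ℂ)) * V').trace =
      ∑ i, (hA.eigenvalues i : ℂ) * V' i i := by
    simp [Matrix.trace, Matrix.diag, Matrix.diagonal_mul]
  rw [hdiag]
  rw [Complex.re_sum]
  apply Finset.sum_le_sum
  intro i _
  have hb : ‖V' i i‖ ≤ 1 := entry_norm_bound_of_unitary hV'mem i i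
  have : ((hA.eigenvalues i : ℂ) * V' i i).re = hA.eigenvalues i * (V' i i).re := by
    simp [Complex.mul_re]
  rw [this]
  calc hA.eigenvalues i * (V' i i).re ≤ |hA.eigenvalues i * (V' i i).re| := le_abs_self _
    _ = |hA.eigenvalues i| * |(V' i i).re| := abs_mul _ _
    _ ≤ |hA.eigenvalues i| * 1 := by
        apply mul_le_mul_of_nonneg_left _ (abs_nonneg _)
        calc |(V' i i).re| ≤ ‖V' i i‖ := Complex.abs_re_le_norm _
          _ ≤ 1 := hb
    _ = |hA.eigenvalues i| := mul_one _

lemma tn_herm_achieve {A : Matrix n n ℂ} (hA : A.IsHermitian) :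
    ∃ W ∈ Matrix.unitaryGroup n ℂ, traceNorm A = (A * W).trace.re := by
  classical
  set sgn : ℝ → ℝ := fun x => if 0 ≤ x then 1 else -1 with hsgn
  refine ⟨hcfc hA sgn, hcfc_unitary hA sgn (fun i => by by_cases h : 0 ≤ hA.eigenvalues i <;>
    simp [sgn, h]), ?_⟩
  have key : hcfc hA (fun x => x) * hcfc hA sgn = hcfc hA (fun x => |x|) := by
    rw [hcfc_mul]
    apply hcfc_congr
    intro i
    show hA.eigenvalues i * sgn (hA.eigenvalues i) = _
    by_cases h : 0 ≤ hA.eigenvalues i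
    · simp [sgn, h, abs_of_nonneg h]
    · simp [sgn, h, abs_of_neg (lt_of_not_ge h)]
  rw [hcfc_id] at key
  rw [key, hcfc_trace, Complex.ofReal_re, tn_herm_eq hA]


-- PART 3 : Powers-Stormer and Re Tr M ≤ Tr sqrt(M Mᴴ)

lemma powers_stormer {A B : Matrix n n ℂ} (hA : A.PosSemidef) (hB : B.PosSemidef) :
    ((A - B) * (A - B)).trace.re ≤ traceNorm (A * A - B * B) := by
  classical
  have hΔ : (A - B).IsHermitian := hA.1.sub hB.1
  have hAA : (A * A).IsHermitian := by rw [← pow_two]; exact (hA.pow 2).1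
  have hBB : (B * B).IsHermitian := by rw [← pow_two]; exact (hB.pow 2).1
  have hX : (A * A - B * B).IsHermitian := hAA.sub hBB
  set sgn : ℝ → ℝ := fun x => if 0 ≤ x then 1 else -1 with hsgn
  set W : Matrix n n ℂ := hcfc hΔ sgn with hW
  have hWmem : W ∈ Matrix.unitaryGroup n ℂ :=
    hcfc_unitary hΔ sgn (fun i => by by_cases h : 0 ≤ hΔ.eigenvalues i <;> simp [sgn, h])
  set absΔ : Matrix n n ℂ := hcfc hΔ (fun x => |x|) with habsΔ
  have k1 : (A - B) * W = absΔ := by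
    have key : hcfc hΔ (fun x => x) * hcfc hΔ sgn = hcfc hΔ (fun x => |x|) := by
      rw [hcfc_mul]
      apply hcfc_congr
      intro i
      show hΔ.eigenvalues i * sgn (hΔ.eigenvalues i) = _
      by_cases h : 0 ≤ hΔ.eigenvalues i
      · simp [sgn, h, abs_of_nonneg h]
      · simp [sgn, h, abs_of_neg (lt_of_not_ge h)]
    rw [hcfc_id] at key
    exact key
  have k2 : W * (A - B) = absΔ := by
    have key : hcfc hΔ sgn * hcfc hΔ (fun x => x) = hcfc hΔ (fun x => |x|) := by
      rw [hcfc_mul]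
      apply hcfc_congr
      intro i
      show sgn (hΔ.eigenvalues i) * hΔ.eigenvalues i = _
      by_cases h : 0 ≤ hΔ.eigenvalues i
      · simp [sgn, h, abs_of_nonneg h]
      · simp [sgn, h, abs_of_neg (lt_of_not_ge h)]
    rw [hcfc_id] at key
    exact key
  -- trace identity
  have hXid : (A + B) * (A - B) + (A - B) * (A + B) = (A * A - B * B) + (A * A - B * B) := by
    noncomm_ring
  have htr1 : ((A * A - B * B) * W).trace = ((A + B) * absΔ).trace := by
    have e1 : ((A * A - B * B) * W).trace + ((A * A - B * B) * W).trace
        = ((A + B) * absΔ).trace + ((A + B) * absΔ).trace := by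
      rw [← trace_add, ← add_mul, ← hXid, add_mul, trace_add]
      congr 1
      · rw [mul_assoc, k1]
      · rw [trace_mul_cycle, k2, trace_mul_comm]
    have e2 : (2 : ℂ) * ((A * A - B * B) * W).trace = 2 * ((A + B) * absΔ).trace := by
      linear_combination e1
    exact mul_left_cancel₀ two_ne_zero e2
  -- decomposition
  have hP1 : (absΔ - (A - B)).PosSemidef := by
    have key : hcfc hΔ (fun x => |x|) - hcfc hΔ (fun x => x)
        = hcfc hΔ ((fun x => |x|) - (fun x => x)) := hcfc_sub hΔ _ _
    rw [hcfc_id] at key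
    rw [key]
    exact hcfc_posSemidef hΔ _ (fun i => by
      simp only [Pi.sub_apply]
      exact sub_nonneg.mpr (le_abs_self _))
  have hP2 : (absΔ + (A - B)).PosSemidef := by
    have key : hcfc hΔ (fun x => |x|) + hcfc hΔ (fun x => x)
        = hcfc hΔ (fun x => |x| + x) := hcfc_add hΔ _ _
    rw [hcfc_id] at key
    rw [key]
    exact hcfc_posSemidef hΔ _ (fun i => by
      have := neg_abs_le (hΔ.eigenvalues i)
      linarith)
  have hdecomp : (A + B) * absΔ
      = (A - B) * (A - B) + (A * (absΔ - (A - B)) + B * (absΔ + (A - B))) := by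
    noncomm_ring
  have hge : ((A - B) * (A - B)).trace.re ≤ ((A + B) * absΔ).trace.re := by
    rw [hdecomp, trace_add, trace_add, Complex.add_re, Complex.add_re]
    have n1 := trace_mul_psd_nonneg hA hP1
    have n2 := trace_mul_psd_nonneg hB hP2
    linarith
  calc ((A - B) * (A - B)).trace.re ≤ ((A + B) * absΔ).trace.re := hge
    _ = ((A * A - B * B) * W).trace.re := by rw [htr1]
    _ ≤ traceNorm (A * A - B * B) := tn_unitary_bound hX hWmem

lemma re_trace_le_trace_msqrt (M : Matrix n n ℂ) :
    M.trace.re ≤ (msqrt (M * Mᴴ)).trace.re := by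
  classical
  have hP : (M * Mᴴ).PosSemidef := posSemidef_self_mul_conjTranspose M
  have hE : ∀ i, 0 ≤ hP.1.eigenvalues i := hP.eigenvalues_nonneg
  have hmsq : (msqrt (M * Mᴴ)).trace.re = ∑ i, Real.sqrt (hP.1.eigenvalues i) := by
    rw [msqrt_eq_hcfc hP, hcfc_trace, Complex.ofReal_re]
  rw [hmsq]
  apply le_of_forall_pos_le_add
  intro ε hε
  set c : ℝ := (Fintype.card n : ℝ) + 1 with hc
  have hcpos : 0 < c := by positivity
  set δ : ℝ := ε / c with hδ
  have hδpos : 0 < δ := by positivity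
  set T : Matrix n n ℂ := hcfc hP.1 (fun x => Real.sqrt x + δ) with hT
  set Ti : Matrix n n ℂ := hcfc hP.1 (fun x => (Real.sqrt x + δ)⁻¹) with hTi
  have hden : ∀ i, 0 < Real.sqrt (hP.1.eigenvalues i) + δ := fun i => by
    have := Real.sqrt_nonneg (hP.1.eigenvalues i); linarith
  have hTiT : Ti * T = 1 := by
    rw [hTi, hT, hcfc_mul, ← hcfc_one hP.1]
    apply hcfc_congr
    intro i
    simp only [Pi.mul_apply]
    field_simp
  have hTpsd : T.PosSemidef := hcfc_posSemidef hP.1 _ (fun i => le_of_lt (hden i))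
  have hTipsd : Ti.PosSemidef := hcfc_posSemidef hP.1 _
    (fun i => le_of_lt (inv_pos.mpr (hden i)))
  have hTherm : Tᴴ = T := (hcfc_herm hP.1 _).eq
  have key : 0 ≤ (Ti * ((M - T) * (M - T)ᴴ)).trace.re :=
    trace_mul_psd_nonneg hTipsd (posSemidef_self_mul_conjTranspose (M - T))
  have hexp : Ti * ((M - T) * (M - T)ᴴ)
      = Ti * (M * Mᴴ) - Ti * M * T - (Ti * T) * Mᴴ + Ti * T * T := by
    rw [conjTranspose_sub, hTherm]
    noncomm_ring
  have hTTi : T * Ti = 1 := by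
    rw [hTi, hT, hcfc_mul, ← hcfc_one hP.1]
    apply hcfc_congr
    intro i
    simp only [Pi.mul_apply]
    field_simp
  have ht1 : (Ti * M * T).trace = M.trace := by
    rw [trace_mul_cycle, hTTi, one_mul]
  have ht2 : ((Ti * T) * Mᴴ).trace.re = M.trace.re := by
    rw [hTiT, one_mul, trace_conjTranspose]
    exact Complex.conj_re _
  have ht3 : (Ti * T * T).trace = T.trace := by rw [hTiT, one_mul]
  have ht4 : (Ti * (M * Mᴴ)).trace.re
      = ∑ i, (Real.sqrt (hP.1.eigenvalues i) + δ)⁻¹ * hP.1.eigenvalues i := by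
    have hmul := hcfc_mul hP.1 (fun x => (Real.sqrt x + δ)⁻¹) (fun x => x)
    rw [hcfc_id] at hmul
    rw [← hTi] at hmul
    rw [hmul, hcfc_trace, Complex.ofReal_re]
    rfl
  have hTtr : T.trace.re = (∑ i, Real.sqrt (hP.1.eigenvalues i)) + Fintype.card n * δ := by
    rw [hT, hcfc_trace, Complex.ofReal_re, Finset.sum_add_distrib, Finset.sum_const]
    simp [mul_comm]
  rw [hexp] at key
  rw [trace_add, trace_sub, trace_sub, Complex.add_re, Complex.sub_re, Complex.sub_re] at key
  rw [ht4, ht2, ht3] at key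
  have ht1re : (Ti * M * T).trace.re = M.trace.re := by rw [ht1]
  rw [ht1re, hTtr] at key
  have bound1 : ∑ i, (Real.sqrt (hP.1.eigenvalues i) + δ)⁻¹ * hP.1.eigenvalues i
      ≤ ∑ i, Real.sqrt (hP.1.eigenvalues i) := by
    apply Finset.sum_le_sum
    intro i _
    rw [inv_mul_le_iff₀ (hden i)]
    have hs : Real.sqrt (hP.1.eigenvalues i) * Real.sqrt (hP.1.eigenvalues i)
        = hP.1.eigenvalues i := Real.mul_self_sqrt (hE i)
    have := Real.sqrt_nonneg (hP.1.eigenvalues i)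
    nlinarith
  have hcard : (Fintype.card n : ℝ) * δ ≤ ε := by
    rw [hδ, hc]
    have h1 : (Fintype.card n : ℝ) / ((Fintype.card n : ℝ) + 1) ≤ 1 := by
      rw [div_le_one (by positivity)]
      linarith
    calc (Fintype.card n : ℝ) * (ε / ((Fintype.card n : ℝ) + 1))
        = ((Fintype.card n : ℝ) / ((Fintype.card n : ℝ) + 1)) * ε := by ring
      _ ≤ 1 * ε := by
          apply mul_le_mul_of_nonneg_right h1 (le_of_lt hε)
      _ = ε := one_mul _
  linarith


-- PART 4 : polar decomposition

lemma proj_eigenvalues {R : Matrix n n ℂ} (hR : R.IsHermitian) (hidem : R * R = R) :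
    ∀ i, hR.eigenvalues i = 0 ∨ hR.eigenvalues i = 1 := by
  intro i
  have h := hcfc_mul hR (fun x => x) (fun x => x)
  rw [hcfc_id, hidem] at h
  have h2 := hcfc_inj hR _ _ ((hcfc_id hR).trans h) i
  simp only [Pi.mul_apply] at h2
  have h3 : hR.eigenvalues i * (hR.eigenvalues i - 1) = 0 := by linear_combination -h2
  rcases mul_eq_zero.mp h3 with h4 | h4
  · exact Or.inl h4
  · exact Or.inr (by linarith)

lemma proj_trace_card {R : Matrix n n ℂ} (hR : R.IsHermitian) (hidem : R * R = R) :
    R.trace = ((Finset.univ.filter (fun i => hR.eigenvalues i = 1)).card : ℂ) := by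
  classical
  have h := hcfc_trace hR (fun x => x)
  rw [hcfc_id] at h
  have hsum : ∑ i, hR.eigenvalues i
      = ((Finset.univ.filter (fun i => hR.eigenvalues i = 1)).card : ℝ) := by
    rw [← Finset.sum_filter_add_sum_filter_not Finset.univ (fun i => hR.eigenvalues i = 1)]
    have hA : ∑ i ∈ Finset.univ.filter (fun i => hR.eigenvalues i = 1), hR.eigenvalues i
        = ∑ _i ∈ Finset.univ.filter (fun i => hR.eigenvalues i = 1), (1 : ℝ) :=
      Finset.sum_congr rfl (fun i hi => (Finset.mem_filter.mp hi).2)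
    have hB : ∑ i ∈ Finset.univ.filter (fun i => ¬ hR.eigenvalues i = 1), hR.eigenvalues i
        = 0 := by
      apply Finset.sum_eq_zero
      intro i hi
      rcases proj_eigenvalues hR hidem i with hx | hx
      · exact hx
      · exact absurd hx (Finset.mem_filter.mp hi).2
    rw [hA, hB, add_zero, Finset.sum_const, nsmul_eq_mul, mul_one]
  rw [h, hsum]
  norm_cast

lemma exists_isometry_pair {R₁ R₂ : Matrix n n ℂ} (h₁ : R₁.IsHermitian) (h₂ : R₂.IsHermitian)
    (i₁ : R₁ * R₁ = R₁) (i₂ : R₂ * R₂ = R₂) (htr : R₁.trace = R₂.trace) :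
    ∃ C : Matrix n n ℂ, C * star C = R₁ ∧ star C * C = R₂ ∧ R₁ * C = C := by
  classical
  set S₁ := Finset.univ.filter (fun i => h₁.eigenvalues i = 1) with hS₁
  set S₂ := Finset.univ.filter (fun i => h₂.eigenvalues i = 1) with hS₂
  have hcard : S₁.card = S₂.card := by
    have t1 := proj_trace_card h₁ i₁
    have t2 := proj_trace_card h₂ i₂
    rw [t1, t2] at htr
    exact_mod_cast htr
  set e : {x // x ∈ S₁} ≃ {x // x ∈ S₂} := Finset.equivOfCardEq hcard with he
  set g : n → n := fun i => if h : i ∈ S₁ then (e ⟨i, h⟩ : n) else i with hg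
  set gi : n → n := fun j => if h : j ∈ S₂ then ((e.symm ⟨j, h⟩ : {x // x ∈ S₁}) : n) else j
    with hgi
  have hg1 : ∀ i ∈ S₁, g i ∈ S₂ := by
    intro i hi
    simp only [hg, dif_pos hi]
    exact (e ⟨i, hi⟩).2
  have hgig : ∀ i ∈ S₁, gi (g i) = i := by
    intro i hi
    simp only [hg, dif_pos hi]
    have h2 : ((e ⟨i, hi⟩ : {x // x ∈ S₂}) : n) ∈ S₂ := (e ⟨i, hi⟩).2
    simp only [hgi, dif_pos h2, Subtype.coe_eta, Equiv.symm_apply_apply]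
  have hgi1 : ∀ j ∈ S₂, gi j ∈ S₁ := by
    intro j hj
    simp only [hgi, dif_pos hj]
    exact (e.symm ⟨j, hj⟩).2
  have hggi : ∀ j ∈ S₂, g (gi j) = j := by
    intro j hj
    have h1 : gi j ∈ S₁ := hgi1 j hj
    simp only [hgi, dif_pos hj] at h1 ⊢
    simp only [hg, dif_pos h1, Subtype.coe_eta, Equiv.apply_symm_apply]
  set E : Matrix n n ℂ := Matrix.of (fun i j => if i ∈ S₁ ∧ g i = j then (1 : ℂ) else 0) with hE
  have hstarE : ∀ i j, star (E i j) = E i j := by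
    intro i j
    simp only [hE, Matrix.of_apply]
    split_ifs <;> simp
  have hEE : E * star E = Matrix.diagonal (fun i => if i ∈ S₁ then (1 : ℂ) else 0) := by
    ext i k
    simp only [Matrix.mul_apply, Matrix.star_apply, hstarE]
    by_cases h1 : i ∈ S₁
    · rw [Finset.sum_eq_single (g i)]
      · by_cases h3 : i = k
        · subst h3
          simp [hE, h1, Matrix.diagonal_apply_eq]
        · have hk : ¬ (k ∈ S₁ ∧ g k = g i) := by
            rintro ⟨hk1, hk2⟩
            exact h3 (((hgig i h1).symm.trans (by rw [← hk2, hgig k hk1])).symm ▸ rfl)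
          simp [hE, h1, hk, Matrix.diagonal_apply_ne _ h3]
      · intro j _ hj
        have : ¬ (i ∈ S₁ ∧ g i = j) := fun hc => hj hc.2.symm
        simp [hE, this]
      · intro h; exact absurd (Finset.mem_univ _) h
    · have hz : ∀ j, E i j = 0 := by
        intro j
        simp [hE, h1]
      simp only [hz, zero_mul, Finset.sum_const_zero]
      by_cases h3 : i = k
      · subst h3; simp [Matrix.diagonal_apply_eq, h1]
      · rw [Matrix.diagonal_apply_ne _ h3]
  have hEE2 : star E * E = Matrix.diagonal (fun j => if j ∈ S₂ then (1 : ℂ) else 0) := by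
    ext j l
    simp only [Matrix.mul_apply, Matrix.star_apply, hstarE]
    by_cases hj : j ∈ S₂
    · rw [Finset.sum_eq_single (gi j)]
      · have h1 : gi j ∈ S₁ := hgi1 j hj
        have h2 : g (gi j) = j := hggi j hj
        by_cases h3 : j = l
        · subst h3
          simp [hE, h1, h2, Matrix.diagonal_apply_eq, hj]
        · have : ¬ (gi j ∈ S₁ ∧ g (gi j) = l) := by
            rintro ⟨-, hc⟩
            exact h3 (h2.symm.trans hc)
          simp only [hE, Matrix.of_apply, if_neg this, Matrix.diagonal_apply_ne _ h3,
            if_pos (And.intro h1 h2), one_mul]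
      · intro i _ hi
        have : ¬ (i ∈ S₁ ∧ g i = j) := by
          rintro ⟨hi1, hi2⟩
          exact hi (by rw [← hi2, hgig i hi1])
        simp [hE, this]
      · intro h; exact absurd (Finset.mem_univ _) h
    · have hz : ∀ i, (if i ∈ S₁ ∧ g i = j then (1 : ℂ) else 0) = 0 := by
        intro i
        have : ¬ (i ∈ S₁ ∧ g i = j) := by
          rintro ⟨hi1, hi2⟩
          exact hj (hi2 ▸ hg1 i hi1)
        simp [this]
      have : ∀ i, E i j * E i l = 0 := by
        intro i
        simp only [hE, Matrix.of_apply]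
        rw [hz i, zero_mul]
      simp only [this, Finset.sum_const_zero]
      by_cases h3 : j = l
      · subst h3; simp [Matrix.diagonal_apply_eq, hj]
      · rw [Matrix.diagonal_apply_ne _ h3]
  have hDE : Matrix.diagonal (fun i => if i ∈ S₁ then (1 : ℂ) else 0) * E = E := by
    ext i j
    rw [Matrix.diagonal_mul]
    by_cases h1 : i ∈ S₁
    · simp [h1]
    · simp [hE, h1]
  -- diagonal identification
  have hD₁ : Matrix.diagonal (fun i => if i ∈ S₁ then (1 : ℂ) else 0)
      = Matrix.diagonal (fun i => ((h₁.eigenvalues i : ℝ) : ℂ)) := by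
    rw [Matrix.diagonal_eq_diagonal_iff]
    intro i
    rcases proj_eigenvalues h₁ i₁ i with hx | hx
    · have : i ∉ S₁ := by simp [hS₁, hx]
      simp [this, hx]
    · have : i ∈ S₁ := by simp [hS₁, hx]
      simp [this, hx]
  have hD₂ : Matrix.diagonal (fun j => if j ∈ S₂ then (1 : ℂ) else 0)
      = Matrix.diagonal (fun j => ((h₂.eigenvalues j : ℝ) : ℂ)) := by
    rw [Matrix.diagonal_eq_diagonal_iff]
    intro i
    rcases proj_eigenvalues h₂ i₂ i with hx | hx
    · have : i ∉ S₂ := by simp [hS₂, hx]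
      simp [this, hx]
    · have : i ∈ S₂ := by simp [hS₂, hx]
      simp [this, hx]
  set U₁ : Matrix n n ℂ := (h₁.eigenvectorUnitary : Matrix n n ℂ) with hU₁
  set U₂ : Matrix n n ℂ := (h₂.eigenvectorUnitary : Matrix n n ℂ) with hU₂
  have c₁ : ∀ X : Matrix n n ℂ, star U₁ * (U₁ * X) = X := fun X => by
    rw [← mul_assoc, Unitary.star_mul_self_of_mem h₁.eigenvectorUnitary.2, one_mul]
  have c₂ : ∀ X : Matrix n n ℂ, star U₂ * (U₂ * X) = X := fun X => by
    rw [← mul_assoc, Unitary.star_mul_self_of_mem h₂.eigenvectorUnitary.2, one_mul]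
  have hspec₁ : R₁ = U₁ * Matrix.diagonal (fun i => ((h₁.eigenvalues i : ℝ) : ℂ)) * star U₁ :=
    h₁.spectral_theorem
  have hspec₂ : R₂ = U₂ * Matrix.diagonal (fun j => ((h₂.eigenvalues j : ℝ) : ℂ)) * star U₂ :=
    h₂.spectral_theorem
  refine ⟨U₁ * E * star U₂, ?_, ?_, ?_⟩
  · have hCstar : star (U₁ * E * star U₂) = U₂ * (star E * star U₁) := by
      rw [Matrix.star_mul, Matrix.star_mul, star_star]
    rw [hCstar, mul_assoc (U₁ * E) (star U₂), c₂ (star E * star U₁), mul_assoc U₁ E,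
      ← mul_assoc E (star E) (star U₁), hEE, hD₁, ← mul_assoc U₁, ← hspec₁]
  · have hCstar : star (U₁ * E * star U₂) = U₂ * (star E * star U₁) := by
      rw [Matrix.star_mul, Matrix.star_mul, star_star]
    rw [hCstar, mul_assoc U₂ (star E * star U₁), mul_assoc (star E) (star U₁),
      mul_assoc U₁ E (star U₂), c₁ (E * star U₂), ← mul_assoc (star E) E (star U₂), hEE2, hD₂,
      ← mul_assoc U₂, ← hspec₂]
  · conv_lhs => rw [hspec₁, ← hD₁]
    rw [mul_assoc (U₁ * Matrix.diagonal (fun i => if i ∈ S₁ then (1 : ℂ) else 0)) (star U₁),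
      mul_assoc U₁ E (star U₂), c₁ (E * star U₂), ← mul_assoc,
      mul_assoc U₁ (Matrix.diagonal (fun i => if i ∈ S₁ then (1 : ℂ) else 0)) E, hDE,
      mul_assoc]

lemma exists_polar (M : Matrix n n ℂ) :
    ∃ V ∈ Matrix.unitaryGroup n ℂ, M = msqrt (M * Mᴴ) * V := by
  classical
  have hP : (M * Mᴴ).PosSemidef := posSemidef_self_mul_conjTranspose M
  have hEv : ∀ i, 0 ≤ hP.1.eigenvalues i := hP.eigenvalues_nonneg
  set q : ℝ → ℝ := fun x => if 0 < x then (Real.sqrt x)⁻¹ else 0 with hq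
  set sf : ℝ → ℝ := fun x => if 0 < x then 1 else 0 with hsf
  set Q := hcfc hP.1 q with hQ
  set R := hcfc hP.1 sf with hRdef
  have hzero : ∀ i, ¬ 0 < hP.1.eigenvalues i → hP.1.eigenvalues i = 0 :=
    fun i h => le_antisymm (not_lt.mp h) (hEv i)
  have f2 : hcfc hP.1 Real.sqrt * Q = R := by
    refine (hcfc_mul hP.1 Real.sqrt q).trans (hcfc_congr hP.1 _ _ ?_)
    intro i
    simp only [Pi.mul_apply]
    by_cases h : 0 < hP.1.eigenvalues i
    · simp [q, sf, h, mul_inv_cancel₀ (ne_of_gt (Real.sqrt_pos.mpr h))]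
    · simp [q, sf, h, hzero i h]
  have hQherm := hcfc_herm hP.1 q
  have hRherm := hcfc_herm hP.1 sf
  have hstarR : star R = R := by
    rw [star_eq_conjTranspose, hRherm.eq]
  have hQP : Q * (M * Mᴴ) = hcfc hP.1 (q * fun x => x) := by
    have h := hcfc_mul hP.1 q (fun x => x)
    rw [hcfc_id] at h
    exact h
  set K := Q * M with hK
  have hKstar : star K = Mᴴ * Q := by
    rw [hK, Matrix.star_mul, star_eq_conjTranspose, star_eq_conjTranspose, hQherm.eq]
  have f3 : K * star K = R := by
    rw [hKstar, hK, mul_assoc Q M (Mᴴ * Q), ← mul_assoc M Mᴴ Q, ← mul_assoc Q (M * Mᴴ) Q, hQP,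
      hcfc_mul]
    refine hcfc_congr hP.1 _ _ ?_
    intro i
    simp only [Pi.mul_apply]
    by_cases h : 0 < hP.1.eigenvalues i
    · have hs := Real.mul_self_sqrt (hEv i)
      have hne := ne_of_gt (Real.sqrt_pos.mpr h)
      simp only [q, sf, if_pos h]
      field_simp
      rw [pow_two, hs]
    · simp [q, sf, h, hzero i h]
  have hRQ : R * Q = Q := by
    refine (hcfc_mul hP.1 sf q).trans (hcfc_congr hP.1 _ _ ?_)
    intro i
    simp only [Pi.mul_apply]
    by_cases h : 0 < hP.1.eigenvalues i
    · simp [q, sf, h]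
    · simp [q, sf, h]
  have hRK : R * K = K := by rw [hK, ← mul_assoc, hRQ]
  have hRP : R * (M * Mᴴ) = M * Mᴴ := by
    have h := hcfc_mul hP.1 sf (fun x => x)
    rw [hcfc_id] at h
    have h2 : hcfc hP.1 (sf * fun x => x) = hcfc hP.1 (fun x => x) := by
      refine hcfc_congr hP.1 _ _ ?_
      intro i
      simp only [Pi.mul_apply]
      by_cases hx : 0 < hP.1.eigenvalues i
      · simp [sf, hx]
      · simp [sf, hx, hzero i hx]
    rw [hcfc_id] at h2
    exact h.trans h2
  have hRM : R * M = M := by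
    have hstar1R : star ((1 - R) * M) = Mᴴ * (1 - R) := by
      rw [Matrix.star_mul, star_sub, star_one, hstarR, star_eq_conjTranspose]
    have hN : ((1 - R) * M) * star ((1 - R) * M) = 0 := by
      rw [hstar1R, mul_assoc (1 - R) M (Mᴴ * (1 - R)), ← mul_assoc M Mᴴ (1 - R),
        ← mul_assoc (1 - R) (M * Mᴴ) (1 - R)]
      rw [sub_mul, one_mul, hRP, sub_self, zero_mul]
    have hNz : (1 - R) * M = 0 := by
      have := hN
      rw [star_eq_conjTranspose] at this
      exact Matrix.self_mul_conjTranspose_eq_zero.mp this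
    have h := hNz
    rw [sub_mul, one_mul] at h
    exact (sub_eq_zero.mp h).symm
  have hRidem : R * R = R := by
    refine (hcfc_mul hP.1 sf sf).trans (hcfc_congr hP.1 _ _ ?_)
    intro i
    simp only [Pi.mul_apply]
    by_cases h : 0 < hP.1.eigenvalues i <;> simp [sf, h]
  set R₂ := star K * K with hR₂
  have hR₂herm : R₂.IsHermitian := by
    show R₂ᴴ = R₂
    rw [hR₂, ← star_eq_conjTranspose, Matrix.star_mul, star_star]
  have hR₂idem : R₂ * R₂ = R₂ := by
    rw [hR₂, mul_assoc (star K) K (star K * K), ← mul_assoc K (star K) K, f3, hRK]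
  have p1herm : (1 - R : Matrix n n ℂ).IsHermitian := Matrix.isHermitian_one.sub hRherm
  have p2herm : (1 - R₂).IsHermitian := Matrix.isHermitian_one.sub hR₂herm
  have p1idem : (1 - R) * (1 - R) = 1 - R := by
    have h : (1 - R) * (1 - R) = 1 - R - (R - R * R) := by noncomm_ring
    rw [h, hRidem, sub_self, sub_zero]
  have p2idem : (1 - R₂) * (1 - R₂) = 1 - R₂ := by
    have h : (1 - R₂) * (1 - R₂) = 1 - R₂ - (R₂ - R₂ * R₂) := by noncomm_ring
    rw [h, hR₂idem, sub_self, sub_zero]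
  have ptr : (1 - R).trace = (1 - R₂).trace := by
    rw [trace_sub, trace_sub]
    congr 1
    rw [hR₂, trace_mul_comm, f3]
  obtain ⟨C, hC1, hC2, hC3⟩ := exists_isometry_pair p1herm p2herm p1idem p2idem ptr
  have hRC : R * C = 0 := by
    have h := hC3
    rw [sub_mul, one_mul] at h
    exact sub_eq_self.mp h
  have hKC : star K * C = 0 := by
    have hKR : star K = star K * R := by
      conv_lhs => rw [← hRK, Matrix.star_mul, hstarR]
    rw [hKR, mul_assoc, hRC, mul_zero]
  have hCK : star C * K = 0 := by
    have h := congrArg star hKC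
    rwa [Matrix.star_mul, star_star, star_zero] at h
  set V := K + C with hV
  have hVunit : V ∈ Matrix.unitaryGroup n ℂ := by
    rw [Matrix.mem_unitaryGroup_iff']
    rw [hV, star_add, add_mul, mul_add, mul_add, hKC, hCK, hC2, ← hR₂]
    abel
  refine ⟨V, hVunit, ?_⟩
  have hmsq : msqrt (M * Mᴴ) = hcfc hP.1 Real.sqrt := msqrt_eq_hcfc hP
  have hsqK : hcfc hP.1 Real.sqrt * K = M := by rw [hK, ← mul_assoc, f2, hRM]
  have hsR : hcfc hP.1 Real.sqrt * R = hcfc hP.1 Real.sqrt := by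
    refine (hcfc_mul hP.1 Real.sqrt sf).trans (hcfc_congr hP.1 _ _ ?_)
    intro i
    simp only [Pi.mul_apply]
    by_cases h : 0 < hP.1.eigenvalues i
    · simp [sf, h]
    · simp [sf, h, hzero i h]
  have hsqC : hcfc hP.1 Real.sqrt * C = 0 := by
    calc hcfc hP.1 Real.sqrt * C = hcfc hP.1 Real.sqrt * ((1 - R) * C) := by rw [hC3]
      _ = (hcfc hP.1 Real.sqrt * (1 - R)) * C := by rw [mul_assoc]
      _ = 0 := by rw [mul_sub, mul_one, hsR, sub_self, zero_mul]
  rw [hmsq, hV, mul_add, hsqK, hsqC, add_zero]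

lemma exists_polar_trace (M : Matrix n n ℂ) :
    ∃ W ∈ Matrix.unitaryGroup n ℂ, M * W = msqrt (M * Mᴴ) := by
  obtain ⟨V, hV, hM⟩ := exists_polar M
  refine ⟨star V, Unitary.star_mem hV, ?_⟩
  conv_lhs => rw [hM]
  rw [mul_assoc, Unitary.mul_star_self_of_mem hV, mul_one]


-- PART 5 : partial trace and outer products

open Kronecker

lemma kron_one_unitary {W : Matrix n n ℂ} (hW : W ∈ Matrix.unitaryGroup n ℂ) :
    W ⊗ₖ (1 : Matrix n n ℂ) ∈ Matrix.unitaryGroup (n × n) ℂ := by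
  rw [Matrix.mem_unitaryGroup_iff']
  have hct : star (W ⊗ₖ (1 : Matrix n n ℂ)) = (star W) ⊗ₖ (1 : Matrix n n ℂ) := by
    ext p q
    simp only [Matrix.star_apply, Matrix.kroneckerMap_apply, star_mul']
    congr 1
    by_cases h : q.2 = p.2
    · simp [Matrix.one_apply, h]
    · simp [Matrix.one_apply, h, Ne.symm h]
  rw [hct, ← Matrix.mul_kronecker_mul, Unitary.star_mul_self_of_mem hW, one_mul,
    Matrix.one_kronecker_one]

/-- partial trace over the second factor -/
noncomputable def ptr (X : Matrix (n × n) (n × n) ℂ) : Matrix n n ℂ :=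
  Matrix.of fun i j => ∑ k, X (i, k) (j, k)

lemma ptr_herm {X : Matrix (n × n) (n × n) ℂ} (hX : X.IsHermitian) : (ptr X).IsHermitian := by
  show (ptr X)ᴴ = ptr X
  ext i j
  simp only [Matrix.conjTranspose_apply, ptr, Matrix.of_apply, star_sum]
  exact Finset.sum_congr rfl fun k _ => hX.apply _ _

lemma ptr_sub (X Y : Matrix (n × n) (n × n) ℂ) : ptr (X - Y) = ptr X - ptr Y := by
  ext i j
  simp [ptr, Finset.sum_sub_distrib]

lemma trace_ptr_mul (X : Matrix (n × n) (n × n) ℂ) (W : Matrix n n ℂ) :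
    (ptr X * W).trace = (X * (W ⊗ₖ (1 : Matrix n n ℂ))).trace := by
  have lhs : (ptr X * W).trace = ∑ i, ∑ j, (∑ k, X (i, k) (j, k)) * W j i := by
    simp [Matrix.trace, Matrix.diag, Matrix.mul_apply, ptr]
  have rhs : (X * (W ⊗ₖ (1 : Matrix n n ℂ))).trace
      = ∑ i, ∑ k, ∑ j, ∑ l, X (i, k) (j, l) * (W j i * (1 : Matrix n n ℂ) l k) := by
    simp [Matrix.trace, Matrix.diag, Matrix.mul_apply, Fintype.sum_prod_type,
      Matrix.kroneckerMap_apply]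
  rw [lhs, rhs]
  apply Finset.sum_congr rfl
  intro i _
  rw [Finset.sum_comm]
  apply Finset.sum_congr rfl
  intro j _
  rw [Finset.sum_mul]
  apply Finset.sum_congr rfl
  intro k _
  rw [Finset.sum_eq_single k]
  · simp [Matrix.one_apply]
  · intro l _ hl
    simp [Matrix.one_apply, hl]
  · intro h
    exact absurd (Finset.mem_univ _) h

lemma tn_ptr_le {X : Matrix (n × n) (n × n) ℂ} (hX : X.IsHermitian) :
    traceNorm (ptr X) ≤ traceNorm X := by
  obtain ⟨W, hW, hach⟩ := tn_herm_achieve (ptr_herm hX)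
  rw [hach, trace_ptr_mul]
  exact tn_unitary_bound hX (kron_one_unitary hW)

/-- outer product of two vectors -/
noncomputable def outer {N : Type*} (a b : N → ℂ) : Matrix N N ℂ :=
  Matrix.of fun p q => a p * star (b q)

variable {N : Type*} [Fintype N] [DecidableEq N]

lemma outer_mul (a b c d : N → ℂ) :
    outer a b * outer c d = (∑ p, star (b p) * c p) • outer a d := by
  ext p q
  simp only [Matrix.mul_apply, outer, Matrix.of_apply, Matrix.smul_apply, smul_eq_mul,
    Finset.sum_mul]
  apply Finset.sum_congr rfl
  intro j _
  ring

lemma outer_herm (a : N → ℂ) : (outer a a).IsHermitian := by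
  show (outer a a)ᴴ = outer a a
  ext p q
  simp only [Matrix.conjTranspose_apply, outer, Matrix.of_apply, star_mul', star_star]
  ring

lemma outer_trace (a b : N → ℂ) : (outer a b).trace = ∑ p, a p * star (b p) := by
  simp [Matrix.trace, Matrix.diag, outer]

lemma ptr_outer (A B : Matrix n n ℂ) :
    ptr (outer (fun p => A p.1 p.2) (fun p => B p.1 p.2)) = A * Bᴴ := by
  ext i j
  simp [ptr, outer, Matrix.mul_apply, Matrix.conjTranspose_apply]

lemma tn_outer_diff (a b : N → ℂ) (ha : ∑ p, a p * star (a p) = 1)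
    (hb : ∑ p, b p * star (b p) = 1) :
    traceNorm (outer a a - outer b b)
      = 2 * Real.sqrt (1 - Complex.normSq (∑ p, star (a p) * b p)) := by
  classical
  set c : ℂ := ∑ p, star (a p) * b p with hc
  have ha' : ∑ p, star (a p) * a p = 1 := by
    rw [← ha]; exact Finset.sum_congr rfl fun p _ => mul_comm _ _
  have hb' : ∑ p, star (b p) * b p = 1 := by
    rw [← hb]; exact Finset.sum_congr rfl fun p _ => mul_comm _ _
  have hcs : ∑ p, star (b p) * a p = star c := by
    rw [hc, star_sum]
    exact Finset.sum_congr rfl fun p _ => by rw [star_mul', star_star, mul_comm]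
  have hca : ∑ p, a p * star (b p) = star c := by
    rw [← hcs]; exact Finset.sum_congr rfl fun p _ => mul_comm _ _
  have hcb : ∑ p, b p * star (a p) = c := by
    rw [hc]; exact Finset.sum_congr rfl fun p _ => mul_comm _ _
  set X : Matrix N N ℂ := outer a a - outer b b with hXdef
  have hX : X.IsHermitian := (outer_herm a).sub (outer_herm b)
  -- products
  have m1 : outer a a * outer a a = outer a a := by rw [outer_mul, ha', one_smul]
  have m4 : outer b b * outer b b = outer b b := by rw [outer_mul, hb', one_smul]
  have m2 : outer a a * outer b b = c • outer a b := by rw [outer_mul, ← hc]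
  have m3 : outer b b * outer a a = star c • outer b a := by rw [outer_mul, hcs]
  have hXX : X * X = outer a a + outer b b - c • outer a b - star c • outer b a := by
    rw [hXdef, sub_mul, mul_sub, mul_sub, m1, m2, m3, m4]
    abel
  have m5 : outer a b * outer a a = star c • outer a a := by rw [outer_mul, hcs]
  have m6 : outer a b * outer b b = outer a b := by rw [outer_mul, hb', one_smul]
  have m7 : outer b a * outer a a = outer b a := by rw [outer_mul, ha', one_smul]
  have m8 : outer b a * outer b b = c • outer b b := by rw [outer_mul, ← hc]
  have hXXX : X * X * X = (1 - c * star c) • X := by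
    rw [hXX, hXdef]
    rw [sub_mul, sub_mul, add_mul, mul_sub, mul_sub, mul_sub, mul_sub, m1, m2, m3, m4,
      smul_mul_assoc, smul_mul_assoc, smul_mul_assoc, smul_mul_assoc, m5, m6, m7, m8,
      smul_smul, smul_smul]
    module
  set u : ℝ := 1 - Complex.normSq c with hu
  have hcoe : (1 - c * star c) = ((u : ℝ) : ℂ) := by
    rw [hu, Complex.ofReal_sub, Complex.ofReal_one, Complex.star_def, Complex.mul_conj]
  have h1 := hcfc_mul hX (fun x => x) (fun x => x)
  rw [hcfc_id] at h1
  have h2 := hcfc_mul hX ((fun x => x) * fun x => x) (fun x => x)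
  rw [hcfc_id] at h2
  have h3 : X * X * X = hcfc hX (((fun x => x) * fun x => x) * fun x => x) := by
    rw [h1]; exact h2
  have h4 := hcfc_smul hX (fun x => x) u
  rw [hcfc_id] at h4
  have h5 : hcfc hX (((fun x => x) * fun x => x) * fun x => x) = hcfc hX (fun x => u * x) := by
    rw [← h3, hXXX, hcoe, h4]
  have heig : ∀ i, hX.eigenvalues i * hX.eigenvalues i * hX.eigenvalues i
      = u * hX.eigenvalues i := by
    intro i
    have h := hcfc_inj hX _ _ h5 i
    simpa [Pi.mul_apply] using h
  have htr2 : (X * X).trace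
      = ((∑ i, (((fun x => x) * fun x => x : ℝ → ℝ)) (hX.eigenvalues i) : ℝ) : ℂ) := by
    rw [h1, hcfc_trace]
  simp only [Pi.mul_apply] at htr2
  have htr2' : (X * X).trace = 2 - 2 * ((Complex.normSq c : ℝ) : ℂ) := by
    rw [hXX, trace_sub, trace_sub, trace_add, trace_smul, trace_smul, outer_trace, outer_trace,
      outer_trace, outer_trace, ha, hb, hca, hcb]
    rw [smul_eq_mul, smul_eq_mul]
    rw [show c * star c = ((Complex.normSq c : ℝ) : ℂ) by rw [Complex.star_def, Complex.mul_conj]]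
    rw [show star c * c = ((Complex.normSq c : ℝ) : ℂ) by
      rw [mul_comm, Complex.star_def, Complex.mul_conj]]
    ring
  have hsum2 : ∑ i, hX.eigenvalues i * hX.eigenvalues i = 2 * u := by
    have h6 := htr2.symm.trans htr2'
    have h7 : ((∑ i, hX.eigenvalues i * hX.eigenvalues i : ℝ) : ℂ) = ((2 * u : ℝ) : ℂ) := by
      rw [h6, hu]
      push_cast
      ring
    exact_mod_cast h7
  have hunn : 0 ≤ u := by
    have hnn : 0 ≤ ∑ i, hX.eigenvalues i * hX.eigenvalues i :=
      Finset.sum_nonneg fun i _ => mul_self_nonneg _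
    linarith [hsum2 ▸ hnn]
  have hpt : ∀ i, Real.sqrt u * |hX.eigenvalues i|
      = hX.eigenvalues i * hX.eigenvalues i := by
    intro i
    rcases eq_or_ne (hX.eigenvalues i) 0 with h | h
    · simp [h]
    · have hsq : hX.eigenvalues i * hX.eigenvalues i = u := mul_right_cancel₀ h (heig i)
      rw [← hsq, Real.sqrt_mul_self_eq_abs]
      exact abs_mul_abs_self (hX.eigenvalues i)
  rw [tn_herm_eq hX]
  by_cases hu0 : u = 0
  · have hz : ∀ i, hX.eigenvalues i = 0 := by
      intro i
      have h := heig i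
      rw [hu0, zero_mul] at h
      rcases mul_eq_zero.mp h with h' | h'
      · rcases mul_eq_zero.mp h' with h'' | h'' <;> exact h''
      · exact h'
    rw [hu0, Real.sqrt_zero, mul_zero]
    exact Finset.sum_eq_zero fun i _ => abs_eq_zero.mpr (hz i)
  · have hupos : 0 < u := lt_of_le_of_ne hunn (Ne.symm hu0)
    have hspos : 0 < Real.sqrt u := Real.sqrt_pos.mpr hupos
    apply mul_left_cancel₀ (ne_of_gt hspos)
    rw [Finset.mul_sum, Finset.sum_congr rfl fun i _ => hpt i, hsum2,
      show Real.sqrt u * (2 * Real.sqrt u) = 2 * (Real.sqrt u * Real.sqrt u) by ring,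
      Real.mul_self_sqrt hunn]


end FvdG


open FvdG Matrix in
/-- **Fuchs–van de Graaf inequalities**: for density matrices `ρ, σ`,
`1 - √F(ρ,σ) ≤ ½‖ρ - σ‖₁ ≤ √(1 - F(ρ,σ))`. -/
theorem fuchs_van_de_graaf {d : ℕ} (ρ σ : Matrix (Fin d) (Fin d) ℂ)
    (hρ : ρ.PosSemidef) (hσ : σ.PosSemidef)
    (hρ1 : ρ.trace = 1) (hσ1 : σ.trace = 1) :
    1 - Real.sqrt (fidelity ρ σ) ≤ (1/2) * traceNorm (ρ - σ) ∧
      (1/2) * traceNorm (ρ - σ) ≤ Real.sqrt (1 - fidelity ρ σ) := by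
  classical
  set Sρ : Matrix (Fin d) (Fin d) ℂ := msqrt ρ with hSρdef
  set Sσ : Matrix (Fin d) (Fin d) ℂ := msqrt σ with hSσdef
  have hSρ : Sρ.PosSemidef := msqrt_psd hρ
  have hSσ : Sσ.PosSemidef := msqrt_psd hσ
  have h2ρ : Sρ * Sρ = ρ := by rw [hSρdef]; exact msqrt_mul_self hρ
  have h2σ : Sσ * Sσ = σ := by rw [hSσdef]; exact msqrt_mul_self hσ
  set M : Matrix (Fin d) (Fin d) ℂ := Sρ * Sσ with hMdef
  have hMMH : M * Mᴴ = msqrt ρ * σ * msqrt ρ := by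
    rw [hMdef, conjTranspose_mul, hSρ.1.eq, hSσ.1.eq, mul_assoc, ← mul_assoc Sσ Sσ Sρ, h2σ,
      ← mul_assoc, hSρdef]
  set s : ℝ := (msqrt (M * Mᴴ)).trace.re with hs
  have hFs : fidelity ρ σ = s ^ 2 := by rw [fidelity, ← hMMH, hs]
  have hs0 : 0 ≤ s := psd_trace_re_nonneg (msqrt_psd (posSemidef_self_mul_conjTranspose M))
  have hsqrtF : Real.sqrt (fidelity ρ σ) = s := by rw [hFs, Real.sqrt_sq hs0]
  -- lower bound
  have hPS := powers_stormer hSρ hSσ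
  rw [h2ρ, h2σ] at hPS
  have hexp : (Sρ - Sσ) * (Sρ - Sσ) = ρ + σ - (M + Sσ * Sρ) := by
    have h : (Sρ - Sσ) * (Sρ - Sσ) = Sρ * Sρ + Sσ * Sσ - (Sρ * Sσ + Sσ * Sρ) := by
      noncomm_ring
    rw [h, h2ρ, h2σ, ← hMdef]
  have htrre : ((Sρ - Sσ) * (Sρ - Sσ)).trace.re = 2 - 2 * M.trace.re := by
    rw [hexp, trace_sub, trace_add, trace_add, hρ1, hσ1, trace_mul_comm Sσ Sρ, ← hMdef]
    simp [Complex.sub_re, Complex.add_re]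
    ring
  have hMle : M.trace.re ≤ s := by rw [hs]; exact re_trace_le_trace_msqrt M
  have hlow : 1 - Real.sqrt (fidelity ρ σ) ≤ (1/2) * traceNorm (ρ - σ) := by
    rw [hsqrtF]
    rw [htrre] at hPS
    linarith
  -- upper bound
  obtain ⟨W, hWmem, hMW⟩ := exists_polar_trace M
  set B : Matrix (Fin d) (Fin d) ℂ := Sσ * W with hBdef
  have hWW : W * star W = 1 := Matrix.mem_unitaryGroup_iff.mp hWmem
  have hBB : B * Bᴴ = σ := by
    rw [hBdef, conjTranspose_mul, ← mul_assoc, mul_assoc Sσ W Wᴴ, ← star_eq_conjTranspose W,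
      hWW, mul_one, hSσ.1.eq, h2σ]
  have hAA : Sρ * Sρᴴ = ρ := by
    rw [hSρ.1.eq, h2ρ]
  have haux : ∀ C : Matrix (Fin d) (Fin d) ℂ,
      ∑ p : Fin d × Fin d, C p.1 p.2 * star (C p.1 p.2) = (C * Cᴴ).trace := by
    intro C
    rw [Matrix.trace]
    simp [Matrix.diag, Matrix.mul_apply, Matrix.conjTranspose_apply, Fintype.sum_prod_type]
  have ha : ∑ p : Fin d × Fin d, Sρ p.1 p.2 * star (Sρ p.1 p.2) = 1 := by
    rw [haux Sρ, hAA, hρ1]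
  have hb : ∑ p : Fin d × Fin d, B p.1 p.2 * star (B p.1 p.2) = 1 := by
    rw [haux B, hBB, hσ1]
  have hcval : ∑ p : Fin d × Fin d, star (Sρ p.1 p.2) * B p.1 p.2 = ((s : ℝ) : ℂ) := by
    have h1 : ∑ p : Fin d × Fin d, star (Sρ p.1 p.2) * B p.1 p.2 = (Sρᴴ * B).trace := by
      rw [Matrix.trace]
      simp only [Matrix.diag_apply, Matrix.mul_apply, Matrix.conjTranspose_apply,
        Fintype.sum_prod_type]
      rw [Finset.sum_comm]
    have h2 : Sρᴴ * B = msqrt (M * Mᴴ) := by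
      rw [hSρ.1.eq, hBdef, ← mul_assoc, ← hMdef, hMW]
    rw [h1, h2, hs]
    exact herm_trace_eq_re (msqrt_psd (posSemidef_self_mul_conjTranspose M)).1
  have htnpure := tn_outer_diff (fun p : Fin d × Fin d => Sρ p.1 p.2)
    (fun p : Fin d × Fin d => B p.1 p.2) ha hb
  rw [hcval, Complex.normSq_ofReal] at htnpure
  have hXbigherm : (outer (fun p : Fin d × Fin d => Sρ p.1 p.2)
      (fun p : Fin d × Fin d => Sρ p.1 p.2)
      - outer (fun p : Fin d × Fin d => B p.1 p.2)
        (fun p : Fin d × Fin d => B p.1 p.2)).IsHermitian :=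
    (outer_herm _).sub (outer_herm _)
  have hptr : ptr (outer (fun p : Fin d × Fin d => Sρ p.1 p.2)
      (fun p : Fin d × Fin d => Sρ p.1 p.2)
      - outer (fun p : Fin d × Fin d => B p.1 p.2)
        (fun p : Fin d × Fin d => B p.1 p.2)) = ρ - σ := by
    rw [ptr_sub, ptr_outer, ptr_outer, hAA, hBB]
  have hup : traceNorm (ρ - σ) ≤ 2 * Real.sqrt (1 - s * s) := by
    rw [← hptr]
    calc traceNorm (ptr _) ≤ _ := tn_ptr_le hXbigherm
      _ = 2 * Real.sqrt (1 - s * s) := htnpure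
  refine ⟨hlow, ?_⟩
  have : Real.sqrt (1 - fidelity ρ σ) = Real.sqrt (1 - s * s) := by
    rw [hFs]; ring_nf
  rw [this]
  linarith
end

section
/- With g_k = (2/(M+1))·sin²(π(2k+1)/(2(M+1))) on {0,…,M}, for fixed integers n ≥ 0 and δ ≥ 0, one has ∑_{k=n}^{M-n} √(g_k g_{k+δ}) ≥ 1 − (1/2)(πδ/(M+1))² − C/M³ for some constant C depending only on n and δ, for all sufficiently large M. -/
/-!
With `θ = π/(M+1)`, the product-to-sum formula gives
`√(g_k g_{k+δ}) ≥ (cos θδ - cos θ(2k+δ+1))/(M+1)`. The cosines in arithmetic progression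
telescope against `sin θ`, and since `(M+1)θ = π` their sum over `k ∈ [n, M-n]` is
`-cos θδ · sin 2nθ / sin θ`. Hence the overlap is at least
`cos θδ · (1 - (2n - sin 2nθ / sin θ)/(M+1))`, where `cos θδ ≥ 1 - (θδ)²/2` and, by
`sin x ≥ x - x³/6` and Jordan's inequality `sin θ ≥ 2θ/π`, the correction is `O(n³θ³)`.
-/

/-- The distribution `g_k = (2/(M+1)) sin²(π(2k+1)/(2(M+1)))` on `{0,…,M}`. -/
noncomputable def gdist (M k : ℕ) : ℝ :=
  (2 / ((M : ℝ) + 1)) * (Real.sin (Real.pi * (2 * (k : ℝ) + 1) / (2 * ((M : ℝ) + 1)))) ^ 2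

open Real Finset

theorem Real.mul_sin_sub_sin_mul_le {x θ : ℝ} (hx : 0 ≤ x) (hθ : 0 ≤ θ) :
    x * sin θ - sin (x * θ) ≤ (x * θ) ^ 3 / 6 := by
  have := mul_le_mul_of_nonneg_left (sin_le hθ) hx
  linarith [sin_ge_sub_cube (mul_nonneg hx hθ)]

theorem Real.sub_sin_mul_div_sin_le {x θ : ℝ} (hx : 0 ≤ x) (hθ : 0 < θ) (hθ' : θ ≤ π / 2) :
    x - sin (x * θ) / sin θ ≤ π * x ^ 3 * θ ^ 2 / 12 := by
  have hjordan := mul_le_sin hθ.le hθ'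
  have hsin : 0 < sin θ := lt_of_lt_of_le (by positivity) hjordan
  calc x - sin (x * θ) / sin θ = (x * sin θ - sin (x * θ)) / sin θ := by field_simp
    _ ≤ (x * θ) ^ 3 / 6 / sin θ :=
      div_le_div_of_nonneg_right (mul_sin_sub_sin_mul_le hx hθ.le) hsin.le
    _ ≤ (x * θ) ^ 3 / 6 / (2 / π * θ) :=
      div_le_div_of_nonneg_left (by positivity) (by positivity) hjordan
    _ = π * x ^ 3 * θ ^ 2 / 12 := by field_simp; ring

theorem Real.sum_Ico_cos_mul_two_sin (θ c : ℝ) {a b : ℕ} (hab : a ≤ b) :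
    (∑ k ∈ Ico a b, cos (θ * (2 * k + 1) + c)) * (2 * sin θ)
      = sin (θ * (2 * b) + c) - sin (θ * (2 * a) + c) := by
  rw [sum_mul, ← sum_Ico_sub (fun k : ℕ ↦ sin (θ * (2 * k) + c)) hab]
  refine sum_congr rfl fun k _ ↦ ?_
  rw [mul_comm, two_mul_sin_mul_cos]
  push_cast
  rw [show θ - (θ * (2 * k + 1) + c) = -(θ * (2 * k) + c) by ring, sin_neg,
    show θ + (θ * (2 * k + 1) + c) = θ * (2 * (k + 1)) + c by ring]
  ring

theorem Real.sum_Icc_cos_mul_sin_eq {M n : ℕ} {θ : ℝ} (hθ : ((M : ℝ) + 1) * θ = π)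
    (hn : 2 * n ≤ M) (c : ℝ) :
    (∑ k ∈ Icc n (M - n), cos (θ * (2 * k + 1) + c)) * sin θ = -(cos c * sin (2 * n * θ)) := by
  have htel := sum_Ico_cos_mul_two_sin θ c (show n ≤ M - n + 1 by omega)
  rw [← Ico_add_one_right_eq_Icc]
  have hcast : ((M - n + 1 : ℕ) : ℝ) = M + 1 - n := by
    rw [Nat.cast_add, Nat.cast_sub (by omega)]; push_cast; ring
  rw [hcast, show θ * (2 * ((M : ℝ) + 1 - n)) + c = c - 2 * n * θ + 2 * π by
    linear_combination 2 * hθ, sin_add_two_pi, show θ * (2 * (n : ℝ)) + c = c + 2 * n * θ by ring,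
    sin_sub, sin_add] at htel
  linear_combination htel / 2

theorem div_cos_sub_cos_le_sqrt_gdist_mul_gdist (M k δ : ℕ) {θ : ℝ} (hθ : θ = π / (M + 1)) :
    (cos (θ * δ) - cos (θ * (2 * k + 1) + θ * δ)) / (M + 1)
      ≤ √(gdist M k * gdist M (k + δ)) := by
  set a := π * (2 * (k : ℝ) + 1) / (2 * ((M : ℝ) + 1)) with ha
  set b := π * (2 * ((k : ℝ) + δ) + 1) / (2 * ((M : ℝ) + 1)) with hb
  have hprod : gdist M k * gdist M (k + δ) = (2 * sin b * sin a / (M + 1)) ^ 2 := by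
    unfold gdist; push_cast; ring
  have hcos : (cos (θ * δ) - cos (θ * (2 * k + 1) + θ * δ)) / (M + 1)
      = 2 * sin b * sin a / (M + 1) := by
    rw [two_mul_sin_mul_sin, hθ]
    congr 3 <;> rw [ha, hb] <;> field_simp <;> ring
  rw [hprod, sqrt_sq_eq_abs, hcos]
  exact le_abs_self _

theorem cos_mul_one_sub_le_sum_sqrt_gdist {M n : ℕ} (δ : ℕ) (hM : 0 < M) (hn : 2 * n ≤ M)
    {θ : ℝ} (hθ : θ = π / (M + 1)) :
    cos (θ * δ) * (1 - (2 * n - sin (2 * n * θ) / sin θ) / (M + 1))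
      ≤ ∑ k ∈ Icc n (M - n), √(gdist M k * gdist M (k + δ)) := by
  have hθM : ((M : ℝ) + 1) * θ = π := by rw [hθ]; field_simp
  have hsin : sin θ ≠ 0 := by
    refine (sin_pos_of_pos_of_lt_pi (by rw [hθ]; positivity) ?_).ne'
    rw [hθ, div_lt_iff₀ (by positivity)]
    nlinarith [pi_pos, (Nat.one_le_cast (α := ℝ)).2 hM]
  have hsum : ∑ k ∈ Icc n (M - n), cos (θ * (2 * k + 1) + θ * δ)
      = -(cos (θ * δ) * sin (2 * n * θ)) / sin θ := by
    rw [eq_div_iff hsin, sum_Icc_cos_mul_sin_eq hθM hn]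
  have hcard : ((Icc n (M - n)).card : ℝ) = M + 1 - 2 * n := by
    rw [Nat.card_Icc, Nat.cast_sub (by omega), Nat.cast_add, Nat.cast_sub (by omega)]
    push_cast; ring
  calc cos (θ * δ) * (1 - (2 * n - sin (2 * n * θ) / sin θ) / (M + 1))
      = ((M + 1 - 2 * n) * cos (θ * δ) - ∑ k ∈ Icc n (M - n), cos (θ * (2 * k + 1) + θ * δ))
          / (M + 1) := by
        rw [hsum]; field_simp; ring
    _ = ∑ k ∈ Icc n (M - n), (cos (θ * δ) - cos (θ * (2 * k + 1) + θ * δ)) / (M + 1) := by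
        rw [← sum_div, sum_sub_distrib, sum_const, nsmul_eq_mul, hcard]
    _ ≤ _ := sum_le_sum fun k _ ↦ div_cos_sub_cos_le_sqrt_gdist_mul_gdist M k δ hθ

theorem two_mul_sub_sin_mul_div_sin_div_le (n : ℕ) {M : ℕ} (hM : 0 < M) {θ : ℝ}
    (hθ : θ = π / (M + 1)) :
    (2 * n - sin (2 * n * θ) / sin θ) / (M + 1) ≤ π ^ 3 * n ^ 3 / M ^ 3 := by
  have hM1 : (1 : ℝ) ≤ M := Nat.one_le_cast.2 hM
  have hθpos : 0 < θ := by rw [hθ]; positivity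
  have hθ2 : θ ≤ π / 2 := by
    rw [hθ]; exact div_le_div_of_nonneg_left pi_pos.le two_pos (by linarith)
  have hθM : θ ≤ π / M := by
    rw [hθ]; exact div_le_div_of_nonneg_left pi_pos.le (by positivity) (by linarith)
  calc (2 * n - sin (2 * n * θ) / sin θ) / (M + 1)
      ≤ π * (2 * n) ^ 3 * θ ^ 2 / 12 / (M + 1) :=
        div_le_div_of_nonneg_right (sub_sin_mul_div_sin_le (by positivity) hθpos hθ2)
          (by positivity)
    _ = 2 / 3 * n ^ 3 * θ ^ 3 := by rw [hθ]; field_simp; ring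
    _ ≤ n ^ 3 * θ ^ 3 := by linarith [show (0 : ℝ) ≤ n ^ 3 * θ ^ 3 by positivity]
    _ ≤ n ^ 3 * (π / M) ^ 3 := by gcongr
    _ = π ^ 3 * n ^ 3 / M ^ 3 := by ring

/-- For fixed `n, δ`, the overlap sum satisfies
`∑_{k=n}^{M-n} √(g_k g_{k+δ}) ≥ 1 − ½(πδ/(M+1))² − C/M³` for all large `M`. -/
theorem sum_sqrt_gdist_asymptotic (n δ : ℕ) :
    ∃ C : ℝ, ∃ M₀ : ℕ, ∀ M : ℕ, M₀ ≤ M →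
      ∑ k ∈ Finset.Icc n (M - n), Real.sqrt (gdist M k * gdist M (k + δ)) ≥
        1 - (1 / 2) * (Real.pi * (δ : ℝ) / ((M : ℝ) + 1)) ^ 2 - C / (M : ℝ) ^ 3 := by
  refine ⟨π ^ 3 * n ^ 3, 2 * n + 2 * δ + 1, fun M hM ↦ ?_⟩
  set θ := π / ((M : ℝ) + 1) with hθ
  have hlow := cos_mul_one_sub_le_sum_sqrt_gdist (n := n) δ (by omega) (by omega) hθ
  have herr := two_mul_sub_sin_mul_div_sin_div_le n (by omega : 0 < M) hθ
  have hθδ : θ * δ ≤ π / 2 := by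
    have hδM : 2 * (δ : ℝ) ≤ M + 1 := by exact_mod_cast (show 2 * δ ≤ M + 1 by omega)
    rw [hθ, div_mul_eq_mul_div, div_le_div_iff₀ (by positivity) two_pos]
    nlinarith [pi_pos]
  have hc0 : 0 ≤ cos (θ * δ) :=
    cos_nonneg_of_mem_Icc ⟨by linarith [pi_pos, show 0 ≤ θ * δ by positivity], hθδ⟩
  have hC : (0 : ℝ) ≤ π ^ 3 * n ^ 3 / M ^ 3 := by positivity
  rw [ge_iff_le, mul_div_right_comm π, ← hθ]
  -- `cos θδ · (1 - E) ≥ cos θδ - C` as `E ≤ C`, `0 ≤ C` and `0 ≤ cos θδ ≤ 1`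
  linarith [one_sub_sq_div_two_le_cos (x := θ * δ), mul_le_mul_of_nonneg_left herr hc0,
    mul_nonneg (sub_nonneg.2 (cos_le_one (θ * δ))) hC]
end

section
/- Let a, ε ∈ [0,1] with b := a + ε ≤ 1, a ≤ ε/8, and ε ≤ 1/2. Then 1 − (√((1−a)(1−a−ε)) + √(a(a+ε)))² ≥ ε/8. -/
/-- Key scalar inequality for the covariant error bound: if `0 ≤ a`, `0 ≤ ε`,
`a + ε ≤ 1`, `a ≤ ε/8` and `ε ≤ 1/2`, then
`1 − (√((1−a)(1−a−ε)) + √(a(a+ε)))² ≥ ε/8`. -/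
theorem one_sub_fid_ge (a ε : ℝ) (ha0 : 0 ≤ a) (ha1 : a ≤ 1) (hε0 : 0 ≤ ε) (hε1 : ε ≤ 1)
    (hb : a + ε ≤ 1) (haε : a ≤ ε / 8) (hεhalf : ε ≤ 1 / 2) :
    1 - (Real.sqrt ((1 - a) * (1 - a - ε)) + Real.sqrt (a * (a + ε))) ^ 2 ≥ ε / 8 := by
  have hx : (1 - a) * (1 - a - ε) ≤ 1 - ε := by nlinarith
  have hsx : Real.sqrt ((1 - a) * (1 - a - ε)) ≤ Real.sqrt (1 - ε) := Real.sqrt_le_sqrt hx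
  have hy : a * (a + ε) ≤ (3 * ε / 8) ^ 2 := by nlinarith
  have hsy : Real.sqrt (a * (a + ε)) ≤ 3 * ε / 8 := by
    have h := Real.sqrt_le_sqrt hy
    rwa [Real.sqrt_sq (by positivity)] at h
  have hs2 : Real.sqrt (1 - ε) ^ 2 = 1 - ε := Real.sq_sqrt (by linarith)
  have hs1 : Real.sqrt (1 - ε) ≤ 1 := Real.sqrt_le_one.mpr (by linarith)
  have hs0 : 0 ≤ Real.sqrt (1 - ε) := Real.sqrt_nonneg _
  have h1 : 0 ≤ Real.sqrt ((1 - a) * (1 - a - ε)) := Real.sqrt_nonneg _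
  have h2 : 0 ≤ Real.sqrt (a * (a + ε)) := Real.sqrt_nonneg _
  nlinarith [sq_nonneg (Real.sqrt (1 - ε) - 1), mul_nonneg hs0 hε0,
    mul_le_mul hsx hsy h2 hs0, sq_nonneg ε]
end

section
/- For the Schur–Weyl measure on Young diagrams with s' boxes and at most d rows given by p_λ = (det Γ)^{-1} · (s')!/(λ̃₁!···λ̃_d!) · d^{-s'} · ∏_{i<j}(λ̃_i − λ̃_j)², where λ̃_j := λ_j + d − j and det Γ = ∏_{j=1}^{d−1} j!, the probability that some row deviates from s'/d by more than (s')^{(1+x)/2}/2 is at most (s'+1)^{d(d−1)/2} · exp(−(s')^x /2) for x > 0, i.e. vanishes faster than any polynomial in s' as s' → ∞. -/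
/-!
Write `V = ∏_{i<j} (λ̃ᵢ - λ̃ⱼ)`, so that `p_λ` is `V²` times explicit factorials. Since
`λ̃ᵢ - λ̃ⱼ = λᵢ - λⱼ + (j - i)`, row `i` of `V` is at most `λ̃ᵢ! / λᵢ!`, and each factor is at
most `(j - i)(s + 1)`, so `V ≤ (∏_{j<d} j!) (s + 1)^{d(d-1)/2}`. Bounding `V²` by the product of
the two bounds gives `p_λ ≤ (s + 1)^{d(d-1)/2} · M(λ)`, with `M` the multinomial distribution of
`s` balls in `d` equally likely boxes.

Under `M` each row is binomial `(s, 1/d)`; Hoeffding's lemma and the exponential Markov inequality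
bound each of the tails `λ₀ > s/d + t` and `λ_{d-1} < s/d - t` by `exp (-2t²/s)`, which is
`exp (-s^x/2)` for `t = s^{(1+x)/2}/2`. A sorted diagram with a deviating row lies in one of the
two tails. For `d ≤ 2`, or for `s = 1`, only the upper tail can occur. Otherwise `d ≥ 3` and
`s ≥ 2`; then the factors of `V` for the pairs `(0, 2)` and `(1, 2)` are at most
`β = (s + 2)/(2(s + 1))` times their bounds (as `λ₁ ≤ s/2`), and `2β² ≤ 1` pays for adding the
two tails.
-/

/-- The Schur–Weyl distribution on Young diagrams `l` with `s` boxes and at most `d` rows: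
`p_λ = (det Γ)⁻¹ · s!/(λ̃₁!⋯λ̃_d!) · d^{−s} · ∏_{i<j}(λ̃ᵢ − λ̃ⱼ)²` with
`λ̃ᵢ = λᵢ + d − 1 − i` (rows indexed from `0`) and `det Γ = ∏_{j<d} j!`. -/
noncomputable def schurWeylProb (d s : ℕ) (l : Fin d → ℕ) : ℝ :=
  (∏ j ∈ Finset.range d, (Nat.factorial j : ℝ))⁻¹ *
    ((Nat.factorial s : ℝ) / ∏ i : Fin d, (Nat.factorial (l i + (d - 1 - (i : ℕ))) : ℝ)) *
    ((d : ℝ) ^ s)⁻¹ *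
    ∏ i : Fin d, ∏ j ∈ Finset.Ioi i,
      (((l i : ℝ) + ((d - 1 - (i : ℕ) : ℕ) : ℝ)) - ((l j : ℝ) + ((d - 1 - (j : ℕ) : ℕ) : ℝ))) ^ 2

open Finset Real MeasureTheory ProbabilityTheory
open scoped Nat

theorem one_sub_add_mul_exp_le (p : ℝ) (hp0 : 0 ≤ p) (hp1 : p ≤ 1) (y : ℝ) :
    1 - p + p * exp y ≤ exp (p * y + y ^ 2 / 8) := by
  let μ : Measure ℝ := Ber(1, 0, ⟨p, hp0, hp1⟩)
  have hmem : ∀ᵐ z ∂μ, z ∈ Set.Icc (0 : ℝ) 1 := by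
    change μ (Set.Icc 0 1)ᶜ = 0
    rw [bernoulliMeasure_apply_of_notMem_of_notMem _ measurableSet_Icc.compl] <;> simp
  have h := (hasSubgaussianMGF_of_mem_Icc aemeasurable_id hmem).mgf_le y
  simp only [mgf, id, μ, integral_bernoulliMeasure] at h
  norm_num at h
  have e₁ : exp (p * y) * exp (y * (1 - p)) = exp y := by rw [← exp_add]; ring_nf
  have e₂ : exp (p * y) * exp (-(y * p)) = 1 := by rw [← exp_add]; ring_nf; exact exp_zero
  calc 1 - p + p * exp y = exp (p * y) * (p * exp (y * (1 - p)) + (1 - p) * exp (-(y * p))) := by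
        linear_combination (-p) * e₁ - (1 - p) * e₂
    _ ≤ exp (p * y) * exp (y ^ 2 / 8) := by gcongr; exact h.trans_eq (by ring_nf)
    _ = exp (p * y + y ^ 2 / 8) := by rw [← exp_add]

noncomputable def multinomialProb (d s : ℕ) (k : Fin d → ℕ) : ℝ :=
  Nat.multinomial univ k / (d : ℝ) ^ s

section Multinomial

variable {d s : ℕ}

theorem multinomialProb_nonneg (k : Fin d → ℕ) : 0 ≤ multinomialProb d s k := by
  unfold multinomialProb; positivity

theorem sum_multinomialProb_mul_exp (i₀ : Fin d) (θ : ℝ) :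
    ∑ k ∈ piAntidiag univ s, multinomialProb d s k * exp (θ * k i₀) =
      ((exp θ + (d - 1)) / d) ^ s := by
  set x : Fin d → ℝ := fun i => if i = i₀ then exp θ else 1
  have hsum : ∑ i, x i = exp θ + (d - 1) := by
    simp [x, sum_ite, filter_ne', filter_eq', card_erase_of_mem, Nat.cast_sub i₀.pos]
  have hprod (k : Fin d → ℕ) : ∏ i, x i ^ k i = exp (θ * k i₀) := by
    simp [x, ite_pow, ← exp_nat_mul, mul_comm]
  rw [← hsum, div_pow, sum_pow_eq_sum_piAntidiag, sum_div]
  refine sum_congr rfl fun k _ => ?_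
  rw [multinomialProb, hprod]
  ring

theorem sum_multinomialProb_filter_le (i₀ : Fin d) (θ c : ℝ) :
    ∑ k ∈ (piAntidiag univ s).filter (fun k => c ≤ θ * (k i₀ - s / d)), multinomialProb d s k ≤
      exp (-c + s * θ ^ 2 / 8) := by
  have hd : (1 : ℝ) ≤ d := by exact_mod_cast i₀.pos
  have hmgf : (exp θ + (d - 1)) / d ≤ exp (θ / d + θ ^ 2 / 8) := by
    have := one_sub_add_mul_exp_le (1 / d) (by positivity) (div_le_one_of_le₀ hd (by positivity)) θ
    convert this using 2 <;> field_simp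
    ring
  calc _ ≤ ∑ k ∈ piAntidiag univ s, multinomialProb d s k * exp (θ * (k i₀ - s / d) - c) := by
        refine (sum_le_sum fun k hk => ?_).trans
          (sum_le_sum_of_subset_of_nonneg (filter_subset _ _) fun k _ _ => ?_)
        · exact le_mul_of_one_le_right (multinomialProb_nonneg k)
            (one_le_exp (by linarith [(mem_filter.1 hk).2]))
        · exact mul_nonneg (multinomialProb_nonneg k) (exp_pos _).le
    _ = exp (-c - θ * s / d) * ((exp θ + (d - 1)) / d) ^ s := by
        rw [← sum_multinomialProb_mul_exp, mul_sum]
        refine sum_congr rfl fun k _ => ?_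
        rw [mul_left_comm, ← exp_add]
        ring_nf
    _ ≤ exp (-c - θ * s / d) * exp (θ / d + θ ^ 2 / 8) ^ s := by gcongr
    _ = exp (-c + s * θ ^ 2 / 8) := by
        rw [← exp_nat_mul, ← exp_add]
        ring_nf

theorem sum_multinomialProb_upper_tail_le (i₀ : Fin d) (hs : 0 < s) {t : ℝ} (ht : 0 ≤ t) :
    ∑ k ∈ (piAntidiag univ s).filter (fun k => s / d + t < k i₀), multinomialProb d s k ≤
      exp (-(2 * t ^ 2 / s)) := by
  have hs' : (0 : ℝ) < s := by exact_mod_cast hs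
  calc _ ≤ ∑ k ∈ (piAntidiag univ s).filter (fun k => 4 * t / s * t ≤ 4 * t / s * (k i₀ - s / d)),
          multinomialProb d s k :=
        sum_le_sum_of_subset_of_nonneg (monotone_filter_right _ fun k _ hk => by gcongr; linarith)
          fun k _ _ => multinomialProb_nonneg k
    _ ≤ _ := sum_multinomialProb_filter_le i₀ _ _
    _ = _ := by congr 1; field_simp; ring

theorem sum_multinomialProb_lower_tail_le (i₀ : Fin d) (hs : 0 < s) {t : ℝ} (ht : 0 ≤ t) :
    ∑ k ∈ (piAntidiag univ s).filter (fun k => (k i₀ : ℝ) < s / d - t), multinomialProb d s k ≤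
      exp (-(2 * t ^ 2 / s)) := by
  have hs' : (0 : ℝ) < s := by exact_mod_cast hs
  calc _ ≤ ∑ k ∈ (piAntidiag univ s).filter
          (fun k => 4 * t / s * t ≤ -(4 * t / s) * (k i₀ - s / d)), multinomialProb d s k :=
        sum_le_sum_of_subset_of_nonneg
          (monotone_filter_right _ fun k _ hk => by rw [neg_mul, ← mul_neg]; gcongr; linarith)
          fun k _ _ => multinomialProb_nonneg k
    _ ≤ _ := sum_multinomialProb_filter_le i₀ _ _
    _ = _ := by congr 1; field_simp; ring

end Multinomial

theorem prod_Ioi_sub_eq_prod_range {M : Type*} [CommMonoid M] {d : ℕ} (i : Fin d) (f : ℕ → M) :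
    ∏ j ∈ Ioi i, f (j - i) = ∏ c ∈ range (d - 1 - i), f (c + 1) := by
  have h := prod_map (Ioi i) Fin.valEmbedding (fun m => f (m - i))
  simp only [Fin.valEmbedding_apply, Fin.map_valEmbedding_Ioi] at h
  rw [← h, ← Finset.Ico_add_one_left_eq_Ioo, prod_Ico_eq_prod_range]
  exact prod_congr (by congr 1; omega) fun c _ => congrArg f (by omega)

theorem prod_Ioi_add_sub_eq_factorial_div {d : ℕ} (i : Fin d) (m : ℕ) :
    ∏ j ∈ Ioi i, ((m : ℝ) + ((j - i : ℕ) : ℝ)) = ((m + (d - 1 - i))! : ℝ) / m ! := by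
  rw [prod_Ioi_sub_eq_prod_range i (fun c => (m : ℝ) + c), eq_div_iff (by positivity),
    ← Nat.factorial_mul_ascFactorial, Nat.ascFactorial_eq_prod_range]
  push_cast
  rw [mul_comm]
  exact congrArg _ (prod_congr rfl fun c _ => by ring)

theorem prod_prod_Ioi_sub_mul_eq {R : Type*} [CommSemiring R] (d : ℕ) (a : R) :
    ∏ i : Fin d, ∏ j ∈ Ioi i, (((j - i : ℕ) : R) * a) =
      (∏ j ∈ range d, (j ! : R)) * a ^ (d * (d - 1) / 2) := by
  calc _ = ∏ i : Fin d, (((d - 1 - i)! : R) * a ^ (d - 1 - i)) := by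
        refine prod_congr rfl fun i _ => ?_
        rw [prod_Ioi_sub_eq_prod_range i (fun m => (m : R) * a), prod_mul_distrib, prod_const,
          card_range, ← prod_range_add_one_eq_factorial]
        push_cast
        rfl
    _ = _ := by
        rw [prod_mul_distrib, prod_pow_eq_pow_sum,
          Fin.prod_univ_eq_prod_range (fun i => ((d - 1 - i)! : R)),
          Fin.sum_univ_eq_sum_range (fun i => d - 1 - i), prod_range_reflect (fun j => (j ! : R)),
          sum_range_reflect (fun j => j), sum_range_id]

theorem prod_le_mul_prod_of_le {ι R : Type*} [CommSemiring R] [PartialOrder R] [IsOrderedRing R]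
    {s : Finset ι} {f g : ι → R} (hf : ∀ i ∈ s, 0 ≤ f i) (hfg : ∀ i ∈ s, f i ≤ g i) {j : ι}
    (hj : j ∈ s) {b : R} (hb : f j ≤ b * g j) : ∏ i ∈ s, f i ≤ b * ∏ i ∈ s, g i := by
  classical
  rw [← mul_prod_erase s f hj, ← mul_prod_erase s g hj, ← mul_assoc]
  exact mul_le_mul hb
    (prod_le_prod (fun i hi => hf i (mem_of_mem_erase hi)) fun i hi => hfg i (mem_of_mem_erase hi))
    (prod_nonneg fun i hi => hf i (mem_of_mem_erase hi)) ((hf j hj).trans hb)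

noncomputable def shiftedLength (d : ℕ) (l : Fin d → ℕ) (i : Fin d) : ℝ :=
  l i + ((d - 1 - i : ℕ) : ℝ)

noncomputable def shiftedVandermonde (d : ℕ) (l : Fin d → ℕ) : ℝ :=
  ∏ i, ∏ j ∈ Ioi i, (shiftedLength d l i - shiftedLength d l j)

section Vandermonde

variable {d s : ℕ} {l : Fin d → ℕ}

theorem schurWeylProb_eq (l : Fin d → ℕ) :
    schurWeylProb d s l = (∏ j ∈ range d, (j ! : ℝ))⁻¹ * (s ! / ∏ i, ((l i + (d - 1 - i))! : ℝ)) *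
      ((d : ℝ) ^ s)⁻¹ * shiftedVandermonde d l ^ 2 := by
  simp only [schurWeylProb, shiftedVandermonde, shiftedLength, prod_pow]

theorem shiftedLength_sub {i j : Fin d} (hij : i ≤ j) :
    shiftedLength d l i - shiftedLength d l j = l i - l j + ((j - i : ℕ) : ℝ) := by
  have hj := j.isLt
  have h : ((d - 1 - i : ℕ) : ℝ) = ((d - 1 - j : ℕ) : ℝ) + ((j - i : ℕ) : ℝ) := by
    rw [← Nat.cast_add]
    exact congrArg _ (by rw [Fin.le_def] at hij; omega)
  rw [shiftedLength, shiftedLength, h]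
  ring

theorem shiftedLength_sub_nonneg (hl : Antitone l) {i j : Fin d} (hij : i ≤ j) :
    0 ≤ shiftedLength d l i - shiftedLength d l j := by
  rw [shiftedLength_sub hij]
  have : (l j : ℝ) ≤ l i := by exact_mod_cast hl hij
  linarith [Nat.cast_nonneg (α := ℝ) ((j : ℕ) - i)]

theorem shiftedLength_sub_le_mul (hsum : ∑ i, l i = s) {i j : Fin d} (hij : i < j) :
    shiftedLength d l i - shiftedLength d l j ≤ ((j - i : ℕ) : ℝ) * (s + 1) := by
  rw [shiftedLength_sub hij.le]
  have hji : (1 : ℝ) ≤ ((j - i : ℕ) : ℝ) := by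
    rw [Fin.lt_def] at hij
    exact_mod_cast (by omega : 1 ≤ (j : ℕ) - i)
  have hli : (l i : ℝ) ≤ s := by
    exact_mod_cast hsum ▸ single_le_sum (fun _ _ => Nat.zero_le _) (mem_univ i)
  nlinarith [(l j).cast_nonneg (α := ℝ), s.cast_nonneg (α := ℝ)]

theorem shiftedVandermonde_nonneg (hl : Antitone l) : 0 ≤ shiftedVandermonde d l :=
  prod_nonneg fun _ _ => prod_nonneg fun _ hj => shiftedLength_sub_nonneg hl (mem_Ioi.1 hj).le

theorem shiftedVandermonde_le_prod_factorial_div (hl : Antitone l) :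
    shiftedVandermonde d l ≤ ∏ i, ((l i + (d - 1 - i))! : ℝ) / (l i)! := by
  refine prod_le_prod (fun i _ => prod_nonneg fun j hj =>
    shiftedLength_sub_nonneg hl (mem_Ioi.1 hj).le) fun i _ => ?_
  rw [← prod_Ioi_add_sub_eq_factorial_div]
  refine prod_le_prod (fun j hj => shiftedLength_sub_nonneg hl (mem_Ioi.1 hj).le) fun j hj => ?_
  rw [shiftedLength_sub (mem_Ioi.1 hj).le]
  linarith [(l j).cast_nonneg (α := ℝ)]

theorem shiftedVandermonde_le (hl : Antitone l) (hsum : ∑ i, l i = s) :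
    shiftedVandermonde d l ≤ (∏ j ∈ range d, (j ! : ℝ)) * (s + 1) ^ (d * (d - 1) / 2) := by
  rw [← prod_prod_Ioi_sub_mul_eq]
  exact prod_le_prod (fun i _ => prod_nonneg fun j hj =>
    shiftedLength_sub_nonneg hl (mem_Ioi.1 hj).le) fun i _ => prod_le_prod
      (fun j hj => shiftedLength_sub_nonneg hl (mem_Ioi.1 hj).le)
      fun j hj => shiftedLength_sub_le_mul hsum (mem_Ioi.1 hj)

theorem schurWeylProb_le_of_shiftedVandermonde_le (hl : Antitone l) (hsum : ∑ i, l i = s) {C : ℝ}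
    (hV : shiftedVandermonde d l ≤
      C * ((∏ j ∈ range d, (j ! : ℝ)) * (s + 1) ^ (d * (d - 1) / 2))) :
    schurWeylProb d s l ≤ C * (s + 1) ^ (d * (d - 1) / 2) * multinomialProb d s l := by
  have hV2 : shiftedVandermonde d l ^ 2 ≤ (∏ i, ((l i + (d - 1 - i))! : ℝ) / (l i)!) *
      (C * ((∏ j ∈ range d, (j ! : ℝ)) * (s + 1) ^ (d * (d - 1) / 2))) := by
    rw [sq]
    exact mul_le_mul (shiftedVandermonde_le_prod_factorial_div hl) hV
      (shiftedVandermonde_nonneg hl) (prod_nonneg fun _ _ => by positivity)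
  have hmult : (Nat.multinomial univ l : ℝ) = s ! / ∏ i, ((l i)! : ℝ) := by
    rw [eq_div_iff (by positivity), ← hsum, mul_comm]
    exact_mod_cast Nat.multinomial_spec univ l
  rw [schurWeylProb_eq, multinomialProb, hmult]
  calc _ ≤ (∏ j ∈ range d, (j ! : ℝ))⁻¹ * (s ! / ∏ i, ((l i + (d - 1 - i))! : ℝ)) *
        ((d : ℝ) ^ s)⁻¹ * ((∏ i, ((l i + (d - 1 - i))! : ℝ) / (l i)!) *
          (C * ((∏ j ∈ range d, (j ! : ℝ)) * (s + 1) ^ (d * (d - 1) / 2)))) := by gcongr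
    _ = _ := by
        rw [prod_div_distrib]
        field_simp

theorem schurWeylProb_le (hl : Antitone l) (hsum : ∑ i, l i = s) :
    schurWeylProb d s l ≤ (s + 1) ^ (d * (d - 1) / 2) * multinomialProb d s l := by
  simpa using schurWeylProb_le_of_shiftedVandermonde_le hl hsum (C := 1)
    (by simpa using shiftedVandermonde_le hl hsum)

end Vandermonde

theorem two_mul_apply_one_le_sum_of_antitone {n : ℕ} {l : Fin (n + 2) → ℕ} (hl : Antitone l) :
    2 * l 1 ≤ ∑ i, l i := by
  have h10 : l 1 ≤ l 0 := hl (Fin.zero_le 1)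
  rw [Fin.sum_univ_succ, Fin.sum_univ_succ, Fin.succ_zero_eq_one]
  omega

theorem shiftedVandermonde_le_of_three_le {n s : ℕ} {l : Fin (n + 3) → ℕ} (hl : Antitone l)
    (hsum : ∑ i, l i = s) :
    shiftedVandermonde (n + 3) l ≤ ((s + 2) / (2 * (s + 1)) : ℝ) ^ 2 *
      ((∏ j ∈ range (n + 3), (j ! : ℝ)) * (s + 1) ^ ((n + 3) * (n + 3 - 1) / 2)) := by
  set β : ℝ := (s + 2) / (2 * (s + 1))
  set D : Fin (n + 3) → Fin (n + 3) → ℝ := fun i j =>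
    shiftedLength (n + 3) l i - shiftedLength (n + 3) l j
  set w : Fin (n + 3) → Fin (n + 3) → ℝ := fun i j => ((j - i : ℕ) : ℝ) * (s + 1)
  have hD (i : Fin (n + 3)) : ∀ j ∈ Ioi i, 0 ≤ D i j :=
    fun j hj => shiftedLength_sub_nonneg hl (mem_Ioi.1 hj).le
  have hDw (i : Fin (n + 3)) : ∀ j ∈ Ioi i, D i j ≤ w i j :=
    fun j hj => shiftedLength_sub_le_mul hsum (mem_Ioi.1 hj)
  have hl₀ : (l 0 : ℝ) ≤ s := by
    exact_mod_cast hsum ▸ single_le_sum (fun _ _ => Nat.zero_le _) (mem_univ 0)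
  have hl₁ : 2 * (l 1 : ℝ) ≤ s := by
    exact_mod_cast hsum ▸ two_mul_apply_one_le_sum_of_antitone (n := n + 1) hl
  have h₀₂ : (0 : Fin (n + 3)) < 2 := by rw [Fin.lt_def, Fin.val_zero, Fin.val_two]; norm_num
  have h₁₂ : (1 : Fin (n + 3)) < 2 := by rw [Fin.lt_def, Fin.val_one, Fin.val_two]; norm_num
  have row₀ : ∏ j ∈ Ioi 0, D 0 j ≤ β * ∏ j ∈ Ioi 0, w 0 j := by
    refine prod_le_mul_prod_of_le (hD 0) (hDw 0) (j := 2) (mem_Ioi.2 h₀₂) ?_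
    simp only [D, w, β, shiftedLength_sub h₀₂.le, Fin.val_zero, Fin.val_two]
    field_simp
    norm_num
    linarith [(l 2).cast_nonneg (α := ℝ)]
  have row₁ : ∏ j ∈ Ioi 1, D 1 j ≤ β * ∏ j ∈ Ioi 1, w 1 j := by
    refine prod_le_mul_prod_of_le (hD 1) (hDw 1) (j := 2) (mem_Ioi.2 h₁₂) ?_
    simp only [D, w, β, shiftedLength_sub h₁₂.le, Fin.val_one, Fin.val_two]
    field_simp
    norm_num
    linarith [(l 2).cast_nonneg (α := ℝ)]
  have rest : ∏ i : Fin (n + 1), ∏ j ∈ Ioi i.succ.succ, D i.succ.succ j ≤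
      ∏ i : Fin (n + 1), ∏ j ∈ Ioi i.succ.succ, w i.succ.succ j :=
    prod_le_prod (fun i _ => prod_nonneg (hD _)) fun i _ => prod_le_prod (hD _) (hDw _)
  rw [← prod_prod_Ioi_sub_mul_eq, shiftedVandermonde]
  simp only [Fin.prod_univ_succ (n := n + 2), Fin.prod_univ_succ (n := n + 1), Fin.succ_zero_eq_one]
  calc _ ≤ (β * ∏ j ∈ Ioi 0, w 0 j) * ((β * ∏ j ∈ Ioi 1, w 1 j) *
        ∏ i : Fin (n + 1), ∏ j ∈ Ioi i.succ.succ, w i.succ.succ j) :=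
        mul_le_mul row₀ (mul_le_mul row₁ rest (prod_nonneg fun i _ => prod_nonneg (hD _))
            ((prod_nonneg (hD 1)).trans row₁))
          (mul_nonneg (prod_nonneg (hD 1)) (prod_nonneg fun i _ => prod_nonneg (hD _)))
          ((prod_nonneg (hD 0)).trans row₀)
    _ = _ := by ring

open Classical in
noncomputable def badDiagrams (d s : ℕ) (t : ℝ) : Finset (Fin d → ℕ) :=
  (piAntidiag univ s).filter fun l => Antitone l ∧ ∃ i, t < |(l i : ℝ) - s / d|

section BadDiagrams

variable {d s : ℕ} {t : ℝ} {l : Fin d → ℕ}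

theorem tsum_eq_sum_badDiagrams (f : (Fin d → ℕ) → ℝ) :
    ∑' lam : {l : Fin d → ℕ // (∀ i j : Fin d, i ≤ j → l j ≤ l i) ∧ (∑ i, l i) = s ∧
        ∃ i, |(l i : ℝ) - (s : ℝ) / (d : ℝ)| > t}, f lam.1 =
      ∑ l ∈ badDiagrams d s t, f l := by
  have hmem (l : Fin d → ℕ) : ((∀ i j : Fin d, i ≤ j → l j ≤ l i) ∧ (∑ i, l i) = s ∧
      ∃ i, |(l i : ℝ) - (s : ℝ) / (d : ℝ)| > t) ↔ l ∈ badDiagrams d s t := by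
    simp only [badDiagrams, mem_filter, mem_piAntidiag, mem_univ, implies_true, and_true]
    tauto
  rw [← Finset.tsum_subtype]
  exact (Equiv.subtypeEquivRight hmem).tsum_eq fun l => f l.1

theorem antitone_of_mem_badDiagrams (hl : l ∈ badDiagrams d s t) : Antitone l :=
  (mem_filter.1 hl).2.1

theorem sum_eq_of_mem_badDiagrams (hl : l ∈ badDiagrams d s t) : ∑ i, l i = s :=
  (mem_piAntidiag.1 (mem_filter.1 hl).1).1

theorem lt_or_lt_of_mem_badDiagrams {n : ℕ} {l : Fin (n + 1) → ℕ}
    (hl : l ∈ badDiagrams (n + 1) s t) :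
    s / (n + 1 : ℕ) + t < l 0 ∨ (l (Fin.last n) : ℝ) < s / (n + 1 : ℕ) - t := by
  obtain ⟨-, hanti, i, hi⟩ := mem_filter.1 hl
  have h₀ : (l i : ℝ) ≤ l 0 := by exact_mod_cast hanti (Fin.zero_le i)
  have hlast : (l (Fin.last n) : ℝ) ≤ l i := by exact_mod_cast hanti (Fin.le_last i)
  rcases lt_abs.1 hi with h | h
  · left; linarith
  · right; linarith

end BadDiagrams

theorem lt_apply_zero_of_apply_last_lt_of_le_one {n s : ℕ} (hn : n ≤ 1) {t : ℝ} (ht : 0 ≤ t)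
    {l : Fin (n + 1) → ℕ} (hsum : ∑ i, l i = s) (h : (l (Fin.last n) : ℝ) < s / (n + 1 : ℕ) - t) :
    s / (n + 1 : ℕ) + t < l 0 := by
  obtain rfl | rfl : n = 0 ∨ n = 1 := by omega
  all_goals
    simp only [← hsum, Fin.sum_univ_succ, Fin.sum_univ_zero, Fin.last, Fin.zero_eta, Fin.mk_one,
      Fin.succ_zero_eq_one] at h ⊢
    push_cast at h ⊢
    linarith

theorem sum_schurWeylProb_badDiagrams_le_of_lower_imp_upper {n s : ℕ} (hs : 0 < s) {t : ℝ}
    (ht : 0 ≤ t) (h : ∀ l ∈ piAntidiag univ s,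
      (l (Fin.last n) : ℝ) < s / (n + 1 : ℕ) - t → s / (n + 1 : ℕ) + t < l 0) :
    ∑ l ∈ badDiagrams (n + 1) s t, schurWeylProb (n + 1) s l ≤
      (s + 1) ^ ((n + 1) * (n + 1 - 1) / 2) * exp (-(2 * t ^ 2 / s)) := by
  have hsub : badDiagrams (n + 1) s t ⊆
      (piAntidiag univ s).filter (fun k => s / (n + 1 : ℕ) + t < k 0) := fun l hl =>
    mem_filter.2 ⟨(mem_filter.1 hl).1,
      (lt_or_lt_of_mem_badDiagrams hl).elim id (h l (mem_filter.1 hl).1)⟩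
  calc _ ≤ ∑ l ∈ badDiagrams (n + 1) s t,
        (s + 1 : ℝ) ^ ((n + 1) * (n + 1 - 1) / 2) * multinomialProb (n + 1) s l :=
        sum_le_sum fun l hl => schurWeylProb_le (antitone_of_mem_badDiagrams hl)
          (sum_eq_of_mem_badDiagrams hl)
    _ ≤ _ := by
        rw [← mul_sum]
        gcongr
        exact (sum_le_sum_of_subset_of_nonneg hsub fun k _ _ => multinomialProb_nonneg k).trans
          (sum_multinomialProb_upper_tail_le 0 hs ht)

theorem sum_schurWeylProb_badDiagrams_le_of_three_le {n s : ℕ} (hs : 2 ≤ s) {t : ℝ} (ht : 0 ≤ t) :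
    ∑ l ∈ badDiagrams (n + 3) s t, schurWeylProb (n + 3) s l ≤
      (s + 1) ^ ((n + 3) * (n + 3 - 1) / 2) * exp (-(2 * t ^ 2 / s)) := by
  set β : ℝ := (s + 2) / (2 * (s + 1))
  have hβ : 2 * β ^ 2 ≤ 1 := by
    have hs' : (2 : ℝ) ≤ s := by exact_mod_cast hs
    rw [div_pow, ← mul_div_assoc, div_le_one (by positivity)]
    nlinarith
  have hM : ∑ l ∈ badDiagrams (n + 3) s t, multinomialProb (n + 3) s l ≤
      2 * exp (-(2 * t ^ 2 / s)) := by
    rw [← sum_filter_add_sum_filter_not _ (fun k => s / (n + 2 + 1 : ℕ) + t < k 0), two_mul]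
    gcongr
    · exact (sum_le_sum_of_subset_of_nonneg (filter_subset_filter _ (filter_subset _ _))
        fun k _ _ => multinomialProb_nonneg k).trans
          (sum_multinomialProb_upper_tail_le 0 (by omega) ht)
    · refine (sum_le_sum_of_subset_of_nonneg (fun l hl => ?_)
        fun k _ _ => multinomialProb_nonneg k).trans
          (sum_multinomialProb_lower_tail_le (Fin.last (n + 2)) (by omega) ht)
      obtain ⟨hl, hup⟩ := mem_filter.1 hl
      exact mem_filter.2 ⟨(mem_filter.1 hl).1, (lt_or_lt_of_mem_badDiagrams hl).resolve_left hup⟩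
  calc _ ≤ ∑ l ∈ badDiagrams (n + 3) s t,
        β ^ 2 * (s + 1 : ℝ) ^ ((n + 3) * (n + 3 - 1) / 2) * multinomialProb (n + 3) s l :=
        sum_le_sum fun l hl => schurWeylProb_le_of_shiftedVandermonde_le
          (antitone_of_mem_badDiagrams hl) (sum_eq_of_mem_badDiagrams hl)
          (shiftedVandermonde_le_of_three_le (antitone_of_mem_badDiagrams hl)
            (sum_eq_of_mem_badDiagrams hl))
    _ ≤ β ^ 2 * (s + 1 : ℝ) ^ ((n + 3) * (n + 3 - 1) / 2) * (2 * exp (-(2 * t ^ 2 / s))) := by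
        rw [← mul_sum]
        gcongr
    _ = 2 * β ^ 2 * ((s + 1 : ℝ) ^ ((n + 3) * (n + 3 - 1) / 2) * exp (-(2 * t ^ 2 / s))) := by
        ring
    _ ≤ _ := mul_le_of_le_one_left (by positivity) hβ

theorem schurWeyl_concentration_general (d s : ℕ) (hd : 1 ≤ d) (hs : 1 ≤ s) (x : ℝ) :
    ∑' lam : {l : Fin d → ℕ // (∀ i j : Fin d, i ≤ j → l j ≤ l i) ∧ (∑ i, l i) = s ∧
        ∃ i, |(l i : ℝ) - (s : ℝ) / (d : ℝ)| > (s : ℝ) ^ ((1 + x) / 2) / 2},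
      schurWeylProb d s lam.1 ≤
      ((s : ℝ) + 1) ^ (d * (d - 1) / 2) * Real.exp (-(s : ℝ) ^ x / 2) := by
  obtain ⟨n, rfl⟩ : ∃ n, d = n + 1 := ⟨d - 1, by omega⟩
  have hs₀ : (0 : ℝ) < s := by exact_mod_cast hs
  set t : ℝ := (s : ℝ) ^ ((1 + x) / 2) / 2
  have ht : 0 ≤ t := by positivity
  have hexp : (s : ℝ) ^ x / 2 = 2 * t ^ 2 / s := by
    rw [div_pow, ← rpow_natCast, ← rpow_mul hs₀.le, Nat.cast_ofNat, div_mul_cancel₀ _ two_ne_zero,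
      rpow_add hs₀, rpow_one]
    field_simp
  rw [tsum_eq_sum_badDiagrams, neg_div, hexp]
  rcases (by omega : n ≤ 1 ∨ (2 ≤ n ∧ s = 1) ∨ (2 ≤ n ∧ 2 ≤ s)) with hn | ⟨hn, rfl⟩ | ⟨hn, hs₂⟩
  · exact sum_schurWeylProb_badDiagrams_le_of_lower_imp_upper hs ht fun l hl =>
      lt_apply_zero_of_apply_last_lt_of_le_one hn ht (mem_piAntidiag.1 hl).1
  · refine sum_schurWeylProb_badDiagrams_le_of_lower_imp_upper hs ht fun l _ hlow =>
      absurd hlow (not_lt.2 ?_)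
    have hn' : (2 : ℝ) ≤ n := by exact_mod_cast hn
    simp only [t, Nat.cast_one, one_rpow]
    rw [sub_le_iff_le_add, div_le_iff₀ (by positivity)]
    push_cast
    nlinarith [(l (Fin.last n)).cast_nonneg (α := ℝ)]
  · obtain ⟨m, rfl⟩ : ∃ m, n = m + 2 := ⟨n - 2, by omega⟩
    exact sum_schurWeylProb_badDiagrams_le_of_three_le hs₂ ht

/-- **Concentration of the Schur–Weyl measure.** The probability that some row of the random
Young diagram deviates from `s/d` by more than `s^{(1+x)/2}/2` is at most
`(s+1)^{d(d−1)/2} · exp(−s^x/2)`. -/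
theorem schurWeyl_concentration (d s : ℕ) (hd : 1 ≤ d) (hs : 1 ≤ s) (x : ℝ) (hx : 0 < x) :
    ∑' lam : {l : Fin d → ℕ // (∀ i j : Fin d, i ≤ j → l j ≤ l i) ∧ (∑ i, l i) = s ∧
        ∃ i, |(l i : ℝ) - (s : ℝ) / (d : ℝ)| > (s : ℝ) ^ ((1 + x) / 2) / 2},
      schurWeylProb d s lam.1 ≤
      ((s : ℝ) + 1) ^ (d * (d - 1) / 2) * Real.exp (-(s : ℝ) ^ x / 2) :=
  schurWeyl_concentration_general d s hd hs x
end
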